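/- arXiv:1812.02866 — 3 statements merged into one kernel-verified Lean document; each statement's English description precedes it below -/
import Mathlib

section
/- Let P be a finite set of points in the plane in general position with |P| ≥ 2, and let T be a spanning tree on P drawn with straight-line edges that minimizes the total Euclidean edge length among all spanning trees on P with the same degree sequence (i.e., for every vertex p, deg(p) is prescribed). Then there are no two edges st and uv of T that cross where s,t,u,v are all non-leaf vertices. -/
open scoped BigOperators

/-- Points of the Euclidean plane. -/
abbrev Pt : Type := EuclideanSpace ℝ (Fin 2)

/-- A set of points in the plane is in general position if no three
distinct points of it are collinear. -/
def GenPos (S : Set Pt) : Prop :=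
  ∀ p q r : Pt, p ∈ S → q ∈ S → r ∈ S → p ≠ q → p ≠ r → q ≠ r →
    ¬ Collinear ℝ ({p, q, r} : Set Pt)

/-- The degree of a vertex: number of neighbors. -/
noncomputable def degr {V : Type*} (G : SimpleGraph V) (v : V) : ℕ :=
  Nat.card {w // G.Adj v w}

/-- The total Euclidean edge length of a straight-line drawing of a
graph on a finite point set. -/
noncomputable def treeLen (P : Finset Pt) (G : SimpleGraph ↥P) : ℝ :=
  ∑ᶠ e ∈ G.edgeSet,
    Sym2.lift ⟨fun a b => dist a.1 b.1, fun a b => dist_comm a.1 b.1⟩ e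

section GraphAux

open SimpleGraph

variable {V : Type*}

lemma reach_del {G : SimpleGraph V} (a b : V) {w x : V} (h : G.Reachable w x) :
    (G.deleteEdges {s(a,b)}).Reachable w x ∨
      ((G.deleteEdges {s(a,b)}).Reachable w a ∨ (G.deleteEdges {s(a,b)}).Reachable w b) ∧
      ((G.deleteEdges {s(a,b)}).Reachable x a ∨ (G.deleteEdges {s(a,b)}).Reachable x b) := by
  obtain ⟨p⟩ := h
  induction p with
  | nil => exact Or.inl (Reachable.refl _)
  | @cons w z x hadj p ih =>
    by_cases he : s(w, z) = s(a, b)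
    · have hw : w = a ∨ w = b := by
        rw [Sym2.eq_iff] at he; tauto
      have hwside : (G.deleteEdges {s(a,b)}).Reachable w a ∨
          (G.deleteEdges {s(a,b)}).Reachable w b := by
        rcases hw with rfl | rfl
        · exact Or.inl (Reachable.refl _)
        · exact Or.inr (Reachable.refl _)
      have hz : z = a ∨ z = b := by
        rw [Sym2.eq_iff] at he; tauto
      rcases ih with h1 | ⟨_, h2⟩
      · refine Or.inr ⟨hwside, ?_⟩
        rcases hz with rfl | rfl
        · exact Or.inl h1.symm
        · exact Or.inr h1.symm
      · exact Or.inr ⟨hwside, h2⟩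
    · have hadj' : (G.deleteEdges {s(a,b)}).Adj w z := by
        rw [deleteEdges_adj]; exact ⟨hadj, by simpa using he⟩
      rcases ih with h1 | ⟨h1, h2⟩
      · exact Or.inl (hadj'.reachable.trans h1)
      · refine Or.inr ⟨?_, h2⟩
        rcases h1 with h1 | h1
        · exact Or.inl (hadj'.reachable.trans h1)
        · exact Or.inr (hadj'.reachable.trans h1)

lemma reach_sup_edge {K : SimpleGraph V} {a b x y : V}
    (h : (K ⊔ SimpleGraph.fromEdgeSet {s(a,b)}).Reachable x y) :
    K.Reachable x y ∨ (K.Reachable x a ∧ K.Reachable b y) ∨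
      (K.Reachable x b ∧ K.Reachable a y) := by
  obtain ⟨p⟩ := h
  induction p with
  | nil => exact Or.inl (Reachable.refl _)
  | @cons x z y hadj p ih =>
    rcases (sup_adj _ _ _ _).mp hadj with hK | hE
    · rcases ih with h1 | ⟨h1, h2⟩ | ⟨h1, h2⟩
      · exact Or.inl (hK.reachable.trans h1)
      · exact Or.inr (Or.inl ⟨hK.reachable.trans h1, h2⟩)
      · exact Or.inr (Or.inr ⟨hK.reachable.trans h1, h2⟩)
    · rw [fromEdgeSet_adj, Set.mem_singleton_iff, Sym2.eq_iff] at hE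
      rcases hE.1 with ⟨rfl, rfl⟩ | ⟨rfl, rfl⟩
      · rcases ih with h1 | ⟨h1, h2⟩ | ⟨h1, h2⟩
        · exact Or.inr (Or.inl ⟨Reachable.refl _, h1⟩)
        · exact Or.inr (Or.inl ⟨h1.symm.trans h1, h2⟩)
        · exact Or.inl h2
      · rcases ih with h1 | ⟨h1, h2⟩ | ⟨h1, h2⟩
        · exact Or.inr (Or.inr ⟨Reachable.refl _, h1⟩)
        · exact Or.inl h2
        · exact Or.inr (Or.inr ⟨h1.symm.trans h1, h2⟩)

lemma acyclic_mono {G H : SimpleGraph V} (h : H ≤ G) (hG : G.IsAcyclic) : H.IsAcyclic :=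
  fun _ c hc => hG (c.mapLe h) (hc.mapLe h)

lemma acyclic_sup_edge {H : SimpleGraph V} (hH : H.IsAcyclic) {a b : V} (hab : a ≠ b)
    (hr : ¬ H.Reachable a b) : (H ⊔ SimpleGraph.fromEdgeSet {s(a,b)}).IsAcyclic := by
  have hnadj : ¬ H.Adj a b := fun h => hr h.reachable
  rw [isAcyclic_iff_forall_adj_isBridge]
  intro x y hxy
  rcases (sup_adj _ _ _ _).mp hxy with hK | hE
  · have hxyab : s(x, y) ≠ s(a, b) := by
      intro h
      rw [Sym2.eq_iff] at h
      rcases h with ⟨rfl, rfl⟩ | ⟨rfl, rfl⟩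
      · exact hnadj hK
      · exact hnadj hK.symm
    have hbr : ¬ (H \ SimpleGraph.fromEdgeSet {s(x,y)}).Reachable x y :=
      ((isAcyclic_iff_forall_adj_isBridge.mp hH) hK)
    rw [isBridge_iff]
    refine fun (hcon : ((H ⊔ SimpleGraph.fromEdgeSet {s(a,b)}) \ SimpleGraph.fromEdgeSet {s(x,y)}).Reachable x y) => ?_
    have heq : (H ⊔ SimpleGraph.fromEdgeSet {s(a,b)}) \ SimpleGraph.fromEdgeSet {s(x,y)}
        = (H \ SimpleGraph.fromEdgeSet {s(x,y)}) ⊔ SimpleGraph.fromEdgeSet {s(a,b)} := by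
      ext p q
      simp only [sdiff_adj, sup_adj, fromEdgeSet_adj, Set.mem_singleton_iff]
      constructor
      · rintro ⟨hpq | ⟨hpq, hne⟩, hnot⟩
        · exact Or.inl ⟨hpq, hnot⟩
        · exact Or.inr ⟨hpq, hne⟩
      · rintro (⟨⟨hpq, hnot⟩⟩ | ⟨hpq, hne⟩)
        · exact ⟨Or.inl hpq, by assumption⟩
        · exact ⟨Or.inr ⟨hpq, hne⟩, fun h => hxyab (hpq.symm.trans h.1).symm⟩
    rw [heq] at hcon
    rcases reach_sup_edge hcon with h1 | ⟨h1, h2⟩ | ⟨h1, h2⟩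
    · exact hbr h1
    · -- x~a, b~y in H \ xy; then a ~ x ~ y ~ b in H
      have hle : H \ SimpleGraph.fromEdgeSet {s(x,y)} ≤ H := sdiff_le
      exact hr (((h1.mono hle).symm.trans hK.reachable).trans (h2.mono hle).symm)
    · have hle : H \ SimpleGraph.fromEdgeSet {s(x,y)} ≤ H := sdiff_le
      exact hr ((h2.mono hle).trans ((h1.mono hle).symm.trans hK.reachable).symm)
  · rw [fromEdgeSet_adj, Set.mem_singleton_iff] at hE
    rw [isBridge_iff]
    refine fun (hcon : ((H ⊔ SimpleGraph.fromEdgeSet {s(a,b)}) \ SimpleGraph.fromEdgeSet {s(x,y)}).Reachable x y) => ?_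
    have heq : (H ⊔ SimpleGraph.fromEdgeSet {s(a,b)}) \ SimpleGraph.fromEdgeSet {s(x,y)} = H := by
      rw [hE.1]
      ext p q
      simp only [sdiff_adj, sup_adj, fromEdgeSet_adj, Set.mem_singleton_iff]
      constructor
      · rintro ⟨hpq | ⟨hpq, hne⟩, hnot⟩
        · exact hpq
        · exact absurd ⟨hpq, hne⟩ hnot
      · intro hpq
        refine ⟨Or.inl hpq, fun h => ?_⟩
        rcases Sym2.eq_iff.mp h.1 with ⟨rfl, rfl⟩ | ⟨rfl, rfl⟩
        · exact hnadj hpq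
        · exact hnadj hpq.symm
    rw [heq] at hcon
    rcases Sym2.eq_iff.mp hE.1 with ⟨rfl, rfl⟩ | ⟨rfl, rfl⟩
    · exact hr hcon
    · exact hr hcon.symm

lemma degr_eq (G : SimpleGraph V) (p : V) : degr G p = (G.neighborSet p).ncard :=
  Nat.card_coe_set_eq _

set_option maxHeartbeats 1000000 in
lemma swap_tree {G : SimpleGraph V} (hT : G.IsTree)
    {s t u v : V} (hst : G.Adj s t) (huv : G.Adj u v)
    (hsu : s ≠ u) (hsv : s ≠ v) (htu : t ≠ u) (htv : t ≠ v)
    (hreach : (G.deleteEdges {s(s,t), s(u,v)}).Reachable s u ∨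
              (G.deleteEdges {s(s,t), s(u,v)}).Reachable t v) :
    ∃ G' : SimpleGraph V, G'.IsTree ∧ (∀ p, degr G' p = degr G p) ∧
      G'.edgeSet = insert s(s,v) (insert s(t,u) (G.edgeSet \ {s(s,t), s(u,v)})) ∧
      ¬ G.Adj s v ∧ ¬ G.Adj t u := by
  have hs_t : s ≠ t := hst.ne
  have hu_v : u ≠ v := huv.ne
  set D : Set (Sym2 V) := {s(s,t), s(u,v)} with hD
  set G'' : SimpleGraph V := G.deleteEdges D with hG''
  set G' : SimpleGraph V := (G'' ⊔ SimpleGraph.fromEdgeSet {s(s,v)}) ⊔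
      SimpleGraph.fromEdgeSet {s(t,u)} with hG'
  have hstuv : s(s,t) ≠ s(u,v) := by simp only [ne_eq, Sym2.eq_iff]; tauto
  have hbr := isAcyclic_iff_forall_adj_isBridge.mp hT.IsAcyclic
  have bridge_st : ¬ (G.deleteEdges {s(s,t)}).Reachable s t := (hbr hst)
  have bridge_uv : ¬ (G.deleteEdges {s(u,v)}).Reachable u v := (hbr huv)
  have hle1 : G'' ≤ G.deleteEdges {s(s,t)} := SimpleGraph.deleteEdges_anti (by simp [hD])
  have hle2 : G'' ≤ G.deleteEdges {s(u,v)} := SimpleGraph.deleteEdges_anti (by simp [hD])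
  have hRst : ¬ G''.Reachable s t := fun h => bridge_st (h.mono hle1)
  have hRuv : ¬ G''.Reachable u v := fun h => bridge_uv (h.mono hle2)
  have hRsv : ¬ G''.Reachable s v := by
    intro h
    rcases hreach with h1 | h1
    · exact hRuv (h1.symm.trans h)
    · exact hRst (h.trans h1.symm)
  have hRtu : ¬ G''.Reachable t u := by
    intro h
    rcases hreach with h1 | h1
    · exact hRst (h1.trans h.symm)
    · exact hRuv (h.symm.trans h1)
  have hm1 : (s(s,v) : Sym2 V) ∉ D := by
    simp only [hD, Set.mem_insert_iff, Set.mem_singleton_iff, Sym2.eq_iff]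
    tauto
  have hm2 : (s(t,u) : Sym2 V) ∉ D := by
    simp only [hD, Set.mem_insert_iff, Set.mem_singleton_iff, Sym2.eq_iff]
    tauto
  have hnadj_sv : ¬ G.Adj s v := fun h =>
    hRsv (SimpleGraph.Adj.reachable (by rw [hG'', SimpleGraph.deleteEdges_adj]; exact ⟨h, hm1⟩))
  have hnadj_tu : ¬ G.Adj t u := fun h =>
    hRtu (SimpleGraph.Adj.reachable (by rw [hG'', SimpleGraph.deleteEdges_adj]; exact ⟨h, hm2⟩))
  -- G'-adjacency of the new edges
  have hadj_sv : G'.Adj s v := by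
    rw [hG']
    exact Or.inl (Or.inr ((SimpleGraph.fromEdgeSet_adj _).mpr ⟨rfl, hsv⟩))
  have hadj_tu : G'.Adj t u := by
    rw [hG']
    exact Or.inr ((SimpleGraph.fromEdgeSet_adj _).mpr ⟨rfl, htu⟩)
  have hG''le : G'' ≤ G' := le_trans le_sup_left le_sup_left
  -- reach to s in G'
  have hBs : G'.Reachable t s := by
    rcases hreach with h1 | h1
    · exact hadj_tu.reachable.trans (h1.mono hG''le).symm
    · exact ((h1.mono hG''le).trans hadj_sv.symm.reachable)
  have hCs : G'.Reachable u s := hadj_tu.symm.reachable.trans hBs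
  have hDs : G'.Reachable v s := hadj_sv.symm.reachable
  have reach4 : ∀ w, G'.Reachable w s := by
    intro w
    have h0 : G.Reachable w s := hT.isConnected.preconnected w s
    have step1 : (G.deleteEdges {s(s,t)}).Reachable w s ∨
        (G.deleteEdges {s(s,t)}).Reachable w t := by
      rcases reach_del s t h0 with h1 | ⟨h1, _⟩
      · exact Or.inl h1
      · exact h1
    have key : ∀ y : V, (G.deleteEdges {s(s,t)}).Reachable w y →
        G''.Reachable w y ∨ G''.Reachable w u ∨ G''.Reachable w v := by
      intro y hy
      have := reach_del u v hy
      rw [SimpleGraph.deleteEdges_deleteEdges, Set.singleton_union] at this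
      rcases this with h1 | ⟨h1, _⟩
      · exact Or.inl h1
      · exact Or.inr h1
    have step2 : G''.Reachable w s ∨ G''.Reachable w t ∨ G''.Reachable w u ∨
        G''.Reachable w v := by
      rcases step1 with h1 | h1
      · rcases key s h1 with h | h
        · exact Or.inl h
        · exact Or.inr (Or.inr h)
      · rcases key t h1 with h | h
        · exact Or.inr (Or.inl h)
        · exact Or.inr (Or.inr h)
    rcases step2 with h | h | h | h
    · exact h.mono hG''le
    · exact (h.mono hG''le).trans hBs
    · exact (h.mono hG''le).trans hCs
    · exact (h.mono hG''le).trans hDs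
  have hconn : G'.Connected := by
    rw [SimpleGraph.connected_iff]
    exact ⟨fun x y => (reach4 x).trans (reach4 y).symm, hT.isConnected.nonempty⟩
  -- acyclicity
  have hA0 : G''.IsAcyclic := acyclic_mono (SimpleGraph.deleteEdges_le D) hT.IsAcyclic
  have hA1 : (G'' ⊔ SimpleGraph.fromEdgeSet {s(s,v)}).IsAcyclic :=
    acyclic_sup_edge hA0 hsv hRsv
  have hR2 : ¬ (G'' ⊔ SimpleGraph.fromEdgeSet {s(s,v)}).Reachable t u := by
    intro h
    rcases reach_sup_edge h with h1 | ⟨h1, h2⟩ | ⟨h1, h2⟩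
    · exact hRtu h1
    · exact hRuv h2.symm
    · -- h1 : t ~ v, h2 : s ~ u in G''
      have hst' : (G.deleteEdges {s(u,v)}).Adj s t := by
        rw [SimpleGraph.deleteEdges_adj]
        exact ⟨hst, by simpa using hstuv⟩
      exact bridge_uv (((h2.mono hle2).symm.trans hst'.reachable).trans (h1.mono hle2))
  have hA2 : G'.IsAcyclic := acyclic_sup_edge hA1 htu hR2
  -- edge set
  have hE : G'.edgeSet = insert s(s,v) (insert s(t,u) (G.edgeSet \ D)) := by
    rw [hG', SimpleGraph.edgeSet_sup, SimpleGraph.edgeSet_sup, hG'',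
      SimpleGraph.edgeSet_deleteEdges, SimpleGraph.edgeSet_fromEdgeSet,
      SimpleGraph.edgeSet_fromEdgeSet]
    ext e
    simp only [Set.mem_union, Set.mem_diff, Set.mem_singleton_iff, Set.mem_insert_iff,
      Set.mem_setOf_eq]
    constructor
    · rintro ((h | ⟨rfl, _⟩) | ⟨rfl, _⟩)
      · exact Or.inr (Or.inr h)
      · exact Or.inl rfl
      · exact Or.inr (Or.inl rfl)
    · rintro (rfl | rfl | h)
      · exact Or.inl (Or.inr ⟨rfl, by simp [Sym2.isDiag_iff_proj_eq, hsv]⟩)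
      · exact Or.inr ⟨rfl, by simp [Sym2.isDiag_iff_proj_eq, htu]⟩
      · exact Or.inl (Or.inl h)
  -- degrees
  have hdeg : ∀ p, degr G' p = degr G p := by
    intro p
    have hadj' : ∀ a b : V, G'.Adj a b ↔
        (G.Adj a b ∧ ¬(s(a,b) = s(s,t) ∨ s(a,b) = s(u,v))) ∨
        (s(a,b) = s(s,v) ∧ a ≠ b) ∨ (s(a,b) = s(t,u) ∧ a ≠ b) := by
      intro a b
      rw [hG']
      simp only [SimpleGraph.sup_adj, SimpleGraph.fromEdgeSet_adj, Set.mem_singleton_iff,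
        hG'', SimpleGraph.deleteEdges_adj, hD, Set.mem_insert_iff, Set.mem_singleton_iff]
      tauto
    rw [degr_eq, degr_eq]
    by_cases hps : p = s
    · subst hps
      have : G'.neighborSet p = insert v (G.neighborSet p \ {t}) := by
        ext w
        simp only [SimpleGraph.mem_neighborSet, hadj' p w, Sym2.eq_iff, Set.mem_insert_iff,
          Set.mem_diff, Set.mem_singleton_iff]
        constructor
        · rintro (⟨h, hn⟩ | ⟨h, hn⟩ | ⟨h, hn⟩) <;> tauto
        · rintro (rfl | ⟨h, hn⟩)
          · exact Or.inr (Or.inl ⟨by tauto, hsv⟩)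
          · exact Or.inl ⟨h, by have := h.ne; tauto⟩
      rw [this]
      have h1 : v ∉ G.neighborSet p := hnadj_sv
      have h2 : t ∈ G.neighborSet p := hst
      exact Set.ncard_exchange h1 h2
    · by_cases hpt : p = t
      · subst hpt
        have : G'.neighborSet p = insert u (G.neighborSet p \ {s}) := by
          ext w
          simp only [SimpleGraph.mem_neighborSet, hadj' p w, Sym2.eq_iff, Set.mem_insert_iff,
            Set.mem_diff, Set.mem_singleton_iff]
          constructor
          · rintro (⟨h, hn⟩ | ⟨h, hn⟩ | ⟨h, hn⟩) <;> tauto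
          · rintro (rfl | ⟨h, hn⟩)
            · exact Or.inr (Or.inr ⟨by tauto, htu⟩)
            · exact Or.inl ⟨h, by have := h.ne; tauto⟩
        rw [this]
        have h1 : u ∉ G.neighborSet p := hnadj_tu
        have h2 : s ∈ G.neighborSet p := hst.symm
        exact Set.ncard_exchange h1 h2
      · by_cases hpu : p = u
        · subst hpu
          have : G'.neighborSet p = insert t (G.neighborSet p \ {v}) := by
            ext w
            simp only [SimpleGraph.mem_neighborSet, hadj' p w, Sym2.eq_iff, Set.mem_insert_iff,
              Set.mem_diff, Set.mem_singleton_iff]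
            constructor
            · rintro (⟨h, hn⟩ | ⟨h, hn⟩ | ⟨h, hn⟩) <;> tauto
            · rintro (rfl | ⟨h, hn⟩)
              · exact Or.inr (Or.inr ⟨by tauto, fun h => htu h.symm⟩)
              · exact Or.inl ⟨h, by have := h.ne; tauto⟩
          rw [this]
          have h1 : t ∉ G.neighborSet p := fun h => hnadj_tu (SimpleGraph.Adj.symm h)
          have h2 : v ∈ G.neighborSet p := huv
          exact Set.ncard_exchange h1 h2
        · by_cases hpv : p = v
          · subst hpv
            have : G'.neighborSet p = insert s (G.neighborSet p \ {u}) := by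
              ext w
              simp only [SimpleGraph.mem_neighborSet, hadj' p w, Sym2.eq_iff, Set.mem_insert_iff,
                Set.mem_diff, Set.mem_singleton_iff]
              constructor
              · rintro (⟨h, hn⟩ | ⟨h, hn⟩ | ⟨h, hn⟩) <;> tauto
              · rintro (rfl | ⟨h, hn⟩)
                · exact Or.inr (Or.inl ⟨by tauto, fun h => hsv h.symm⟩)
                · exact Or.inl ⟨h, by have := h.ne; tauto⟩
            rw [this]
            have h1 : s ∉ G.neighborSet p := fun h => hnadj_sv (SimpleGraph.Adj.symm h)
            have h2 : u ∈ G.neighborSet p := huv.symm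
            exact Set.ncard_exchange h1 h2
          · have : G'.neighborSet p = G.neighborSet p := by
              ext w
              simp only [SimpleGraph.mem_neighborSet, hadj' p w, Sym2.eq_iff]
              constructor
              · rintro (⟨h, hn⟩ | ⟨h, hn⟩ | ⟨h, hn⟩) <;> tauto
              · intro h
                exact Or.inl ⟨h, by tauto⟩
            rw [this]
  exact ⟨G', ⟨hconn, hA2⟩, hdeg, hE, hnadj_sv, hnadj_tu⟩

end GraphAux

lemma ne_of_mem_openSegment {p q x : Pt} (h : x ∈ openSegment ℝ p q) (hpq : p ≠ q) :
    p ≠ x := by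
  rintro rfl
  obtain ⟨a, b, ha, hb, hab, hx⟩ := h
  apply hpq
  have h1 : b • q = b • p := by
    have : a • p + b • q = (a + b) • p := by rw [hab, one_smul]; exact hx
    rw [add_smul] at this
    linear_combination (norm := module) this
  have := smul_right_injective Pt (ne_of_gt hb) h1
  exact this.symm

lemma collinear_of_wbtw {p q r x : Pt} (h1 : Wbtw ℝ p x q) (h2 : Wbtw ℝ p x r)
    (hpx : p ≠ x) : Collinear ℝ ({p, q, r} : Set Pt) := by
  have c1 : Collinear ℝ ({x, p, q} : Set Pt) :=
    collinear_insert_of_mem_affineSpan_pair h1.mem_affineSpan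
  have c2 : Collinear ℝ ({x, p, r} : Set Pt) :=
    collinear_insert_of_mem_affineSpan_pair h2.mem_affineSpan
  have hq : q ∈ line[ℝ, p, x] :=
    c1.mem_affineSpan_of_mem_of_ne (by simp) (by simp) (by simp) hpx
  have hr : r ∈ line[ℝ, p, x] :=
    c2.mem_affineSpan_of_mem_of_ne (by simp) (by simp) (by simp) hpx
  have := collinear_insert_insert_of_mem_affineSpan_pair hq hr
  exact this.subset (by intro z hz; simp at hz ⊢; tauto)

/-- two distinct open segments emanating from a common point cannot meet (general position) -/
lemma geom_aux {P : Finset Pt} (hgp : GenPos ↑P) {p q r : Pt}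
    (hp : p ∈ P) (hq : q ∈ P) (hr : r ∈ P)
    (hpq : p ≠ q) (hpr : p ≠ r) (hqr : q ≠ r) {x : Pt}
    (hx1 : x ∈ openSegment ℝ p q) (hx2 : x ∈ openSegment ℝ p r) : False := by
  have w1 : Wbtw ℝ p x q := mem_segment_iff_wbtw.mp (openSegment_subset_segment _ _ _ hx1)
  have w2 : Wbtw ℝ p x r := mem_segment_iff_wbtw.mp (openSegment_subset_segment _ _ _ hx2)
  exact hgp p q r hp hq hr hpq hpr hqr
    (collinear_of_wbtw w1 w2 (ne_of_mem_openSegment hx1 hpq))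

lemma geom_distinct {P : Finset Pt} (hgp : GenPos ↑P) {s t u v : Pt}
    (hs : s ∈ P) (ht : t ∈ P) (hu : u ∈ P) (hv : v ∈ P)
    (hst : s ≠ t) (huv : u ≠ v) (hne : ¬((s = u ∧ t = v) ∨ (s = v ∧ t = u)))
    {x : Pt} (hx1 : x ∈ openSegment ℝ s t) (hx2 : x ∈ openSegment ℝ u v) :
    s ≠ u ∧ s ≠ v ∧ t ≠ u ∧ t ≠ v := by
  have hx1' : x ∈ openSegment ℝ t s := by rwa [openSegment_symm]
  have hx2' : x ∈ openSegment ℝ v u := by rwa [openSegment_symm]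
  refine ⟨?_, ?_, ?_, ?_⟩
  · rintro rfl
    exact geom_aux hgp hs ht hv hst huv (fun h => hne (Or.inl ⟨rfl, h⟩)) hx1 hx2
  · rintro rfl
    exact geom_aux hgp hs ht hu hst (Ne.symm huv) (fun h => hne (Or.inr ⟨rfl, h⟩)) hx1 hx2'
  · rintro rfl
    exact geom_aux hgp ht hs hv (Ne.symm hst) huv (fun h => hne (Or.inr ⟨h, rfl⟩)) hx1' hx2
  · rintro rfl
    exact geom_aux hgp ht hs hu (Ne.symm hst) (Ne.symm huv) (fun h => hne (Or.inl ⟨h, rfl⟩)) hx1' hx2'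

lemma cross_dist_lt {P : Finset Pt} (hgp : GenPos ↑P) {s t u v : Pt}
    (hs : s ∈ P) (ht : t ∈ P) (hv : v ∈ P)
    (hst : s ≠ t) (hsv : s ≠ v) (htv : t ≠ v)
    {x : Pt} (hx1 : x ∈ openSegment ℝ s t) (hx2 : x ∈ openSegment ℝ u v) :
    dist s v + dist t u < dist s t + dist u v := by
  have w1 : Wbtw ℝ s x t := mem_segment_iff_wbtw.mp (openSegment_subset_segment _ _ _ hx1)
  have w2 : Wbtw ℝ u x v := mem_segment_iff_wbtw.mp (openSegment_subset_segment _ _ _ hx2)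
  have e1 : dist s x + dist x t = dist s t := dist_add_dist_eq_iff.mpr w1
  have e2 : dist u x + dist x v = dist u v := dist_add_dist_eq_iff.mpr w2
  have t2 : dist t u ≤ dist t x + dist x u := dist_triangle _ _ _
  have t1 : dist s v < dist s x + dist x v := by
    rcases lt_or_eq_of_le (dist_triangle s x v) with h | h
    · exact h
    · exfalso
      have w3 : Wbtw ℝ s x v := dist_add_dist_eq_iff.mp h.symm
      exact hgp s t v hs ht hv hst hsv htv
        (collinear_of_wbtw w1 w3 (ne_of_mem_openSegment hx1 hst))
  have : dist x u = dist u x := dist_comm _ _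
  have : dist t x = dist x t := dist_comm _ _
  linarith [dist_comm x u, dist_comm t x]

lemma treeLen_lt (P : Finset Pt) (G G' : SimpleGraph ↥P) (s t u v : ↥P)
    (hstE : s(s,t) ∈ G.edgeSet) (huvE : s(u,v) ∈ G.edgeSet)
    (hnestuv : s(s,t) ≠ s(u,v)) (h1 : s(s,v) ∉ G.edgeSet) (h2 : s(t,u) ∉ G.edgeSet)
    (h12 : s(s,v) ≠ s(t,u))
    (hE : G'.edgeSet = insert s(s,v) (insert s(t,u) (G.edgeSet \ {s(s,t), s(u,v)})))
    (hlt : dist s.1 v.1 + dist t.1 u.1 < dist s.1 t.1 + dist u.1 v.1) :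
    treeLen P G' < treeLen P G := by
  classical
  have hfin : G.edgeSet.Finite := Set.toFinite _
  have hfin' : G'.edgeSet.Finite := Set.toFinite _
  rw [treeLen, treeLen, ← Set.Finite.coe_toFinset hfin, ← Set.Finite.coe_toFinset hfin',
    finsum_mem_coe_finset, finsum_mem_coe_finset]
  have hBA : hfin'.toFinset
      = insert s(s,v) (insert s(t,u) (hfin.toFinset \ {s(s,t), s(u,v)})) := by
    ext e
    simp only [Set.Finite.mem_toFinset, hE, Set.mem_insert_iff, Finset.mem_insert,
      Finset.mem_sdiff, Set.mem_diff, Finset.mem_singleton, Set.mem_singleton_iff]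
  have hsub : ({s(s,t), s(u,v)} : Finset (Sym2 ↥P)) ⊆ hfin.toFinset := by
    intro e he
    simp only [Finset.mem_insert, Finset.mem_singleton] at he
    rw [Set.Finite.mem_toFinset]
    rcases he with rfl | rfl
    · exact hstE
    · exact huvE
  have hnotin1 : s(s,v) ∉ insert s(t,u) (hfin.toFinset \ {s(s,t), s(u,v)}) := by
    simp only [Finset.mem_insert, Finset.mem_sdiff, Set.Finite.mem_toFinset]
    push_neg
    exact ⟨h12, fun h => absurd h h1⟩
  have hnotin2 : s(t,u) ∉ hfin.toFinset \ {s(s,t), s(u,v)} := by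
    simp only [Finset.mem_sdiff, Set.Finite.mem_toFinset]
    exact fun h => absurd h.1 h2
  have hsplit : ∑ e ∈ hfin.toFinset,
        Sym2.lift ⟨fun a b => dist a.1 b.1, fun a b => dist_comm a.1 b.1⟩ e
      = ∑ e ∈ hfin.toFinset \ {s(s,t), s(u,v)},
          Sym2.lift ⟨fun a b => dist a.1 b.1, fun a b => dist_comm a.1 b.1⟩ e
        + (dist s.1 t.1 + dist u.1 v.1) := by
    rw [← Finset.sum_sdiff hsub, Finset.sum_pair hnestuv, Sym2.lift_mk, Sym2.lift_mk]
  rw [hBA, Finset.sum_insert hnotin1, Finset.sum_insert hnotin2, hsplit,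
    Sym2.lift_mk, Sym2.lift_mk]
  linarith


theorem crossing_nonleaves_not_minimal (P : Finset Pt) (hgp : GenPos ↑P)
    (hP : 2 ≤ P.card) (G : SimpleGraph ↥P) (hT : G.IsTree)
    (s t u v : ↥P) (hst : G.Adj s t) (huv : G.Adj u v)
    (hne : s(s, t) ≠ s(u, v))
    (hcross : (openSegment ℝ s.1 t.1 ∩ openSegment ℝ u.1 v.1).Nonempty)
    (hds : 2 ≤ degr G s) (hdt : 2 ≤ degr G t)
    (hdu : 2 ≤ degr G u) (hdv : 2 ≤ degr G v) :
    ∃ G' : SimpleGraph ↥P, G'.IsTree ∧ (∀ p, degr G' p = degr G p) ∧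
      treeLen P G' < treeLen P G := by
  obtain ⟨x, hx1, hx2⟩ := hcross
  have hst1 : s.1 ≠ t.1 := fun h => hst.ne (Subtype.ext h)
  have huv1 : u.1 ≠ v.1 := fun h => huv.ne (Subtype.ext h)
  have hne1 : ¬((s.1 = u.1 ∧ t.1 = v.1) ∨ (s.1 = v.1 ∧ t.1 = u.1)) := by
    intro h
    apply hne
    rw [Sym2.eq_iff]
    rcases h with ⟨h1, h2⟩ | ⟨h1, h2⟩
    · exact Or.inl ⟨Subtype.ext h1, Subtype.ext h2⟩
    · exact Or.inr ⟨Subtype.ext h1, Subtype.ext h2⟩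
  obtain ⟨hsu1, hsv1, htu1, htv1⟩ :=
    geom_distinct hgp s.2 t.2 u.2 v.2 hst1 huv1 hne1 hx1 hx2
  have hsu : s ≠ u := fun h => hsu1 (congrArg _ h)
  have hsv : s ≠ v := fun h => hsv1 (congrArg _ h)
  have htu : t ≠ u := fun h => htu1 (congrArg _ h)
  have htv : t ≠ v := fun h => htv1 (congrArg _ h)
  have hx2' : x ∈ openSegment ℝ v.1 u.1 := by rwa [openSegment_symm]
  have hx1' : x ∈ openSegment ℝ t.1 s.1 := by rwa [openSegment_symm]
  -- reachability dichotomy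
  set G'' : SimpleGraph ↥P := G.deleteEdges {s(s,t), s(u,v)} with hG''
  have hbig : (G''.Reachable s u ∨ G''.Reachable t v) ∨
      (G''.Reachable s v ∨ G''.Reachable t u) := by
    have h0 : G.Reachable u s := hT.isConnected.preconnected u s
    have kk : ∀ y : ↥P, (G.deleteEdges {s(s,t)}).Reachable u y →
        (G''.Reachable u y ∨
          ((G''.Reachable u u ∨ G''.Reachable u v) ∧
           (G''.Reachable y u ∨ G''.Reachable y v))) := by
      intro y hy
      have := reach_del u v hy
      rwa [SimpleGraph.deleteEdges_deleteEdges, Set.singleton_union, ← hG''] at this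
    have step1 : (G.deleteEdges {s(s,t)}).Reachable u s ∨
        (G.deleteEdges {s(s,t)}).Reachable u t := by
      rcases reach_del s t h0 with h1 | ⟨h1, _⟩
      · exact Or.inl h1
      · exact h1
    rcases step1 with h1 | h1
    · rcases kk s h1 with k | ⟨_, k2⟩
      · exact Or.inl (Or.inl k.symm)
      · rcases k2 with k2 | k2
        · exact Or.inl (Or.inl k2)
        · exact Or.inr (Or.inl k2)
    · rcases kk t h1 with k | ⟨_, k2⟩
      · exact Or.inr (Or.inr k.symm)
      · rcases k2 with k2 | k2
        · exact Or.inr (Or.inr k2)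
        · exact Or.inl (Or.inr k2)
  rcases hbig with hreach | hreach
  · obtain ⟨G', htree, hdeg, hE, hnadj1, hnadj2⟩ :=
      swap_tree hT hst huv hsu hsv htu htv hreach
    refine ⟨G', htree, hdeg, ?_⟩
    have h12 : s(s,v) ≠ s(t,u) := by
      simp only [ne_eq, Sym2.eq_iff]
      push_neg
      constructor
      · intro h; exact absurd h hst.ne
      · intro h; exact absurd h hsu
    refine treeLen_lt P G G' s t u v hst
      huv hne (fun h => hnadj1 h) (fun h => hnadj2 h)
      h12 hE ?_
    exact cross_dist_lt hgp s.2 t.2 v.2 hst1 hsv1 htv1 hx1 hx2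
  · have hreach' : (G.deleteEdges {s(s,t), s(v,u)}).Reachable s v ∨
        (G.deleteEdges {s(s,t), s(v,u)}).Reachable t u := by
      rwa [Sym2.eq_swap (a := v) (b := u)]
    obtain ⟨G', htree, hdeg, hE, hnadj1, hnadj2⟩ :=
      swap_tree hT hst huv.symm hsv hsu htv htu hreach'
    refine ⟨G', htree, hdeg, ?_⟩
    have hne' : s(s,t) ≠ s(v,u) := by rwa [Sym2.eq_swap (a := v) (b := u)]
    have h12 : s(s,u) ≠ s(t,v) := by
      simp only [ne_eq, Sym2.eq_iff]
      push_neg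
      constructor
      · intro h; exact absurd h hst.ne
      · intro h; exact absurd h hsv
    refine treeLen_lt P G G' s t v u hst
      huv.symm hne' (fun h => hnadj1 h) (fun h => hnadj2 h)
      h12 hE ?_
    exact cross_dist_lt hgp s.2 t.2 u.2 hst1 hsu1 htu1 hx1 hx2'
end

section
/- Let R (red points) and B (blue points) be disjoint finite sets of points in the plane such that R ∪ B is in general position, and let f : R → {2,3,4,…}. If |B| = Σ_{x∈R}(f(x)−2) + 2 and |B| ≥ 2, then there exists a non-crossing geometric spanning tree T on R ∪ B (edges are straight-line segments, no two edges cross) such that the set of leaves of T equals B and deg_T(x) = f(x) for every x ∈ R. -/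
open scoped BigOperators

noncomputable instance : DecidableEq Pt := Classical.decEq _

/-- A straight-line drawing of a graph on a point set is non-crossing if the
open segments of any two distinct edges are disjoint. -/
def NonCrossing (P : Finset Pt) (G : SimpleGraph ↥P) : Prop :=
  ∀ a b c d : ↥P, G.Adj a b → G.Adj c d → s(a, b) ≠ s(c, d) →
    openSegment ℝ a.1 b.1 ∩ openSegment ℝ c.1 d.1 = ∅


namespace NCT
set_option linter.unusedSectionVars false


noncomputable def Aset {ι : Type} [DecidableEq ι] (I : Finset ι) (c t : ι → ℝ) (τ : ℝ) :
    Finset ι := I.filter (fun i => 0 < c i * (τ - t i))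

noncomputable def Sval {ι : Type} [DecidableEq ι] (I : Finset ι) (c t : ι → ℝ) (w : ι → ℤ)
    (τ : ℝ) : ℤ := ∑ i ∈ Aset I c t τ, w i

lemma mem_Aset_of_lt {ι : Type} [DecidableEq ι] {I : Finset ι} {c t : ι → ℝ} {τ : ℝ}
    {i : ι} (hi : i ∈ I) (h : t i < τ) : i ∈ Aset I c t τ ↔ 0 < c i := by
  simp only [Aset, Finset.mem_filter, hi, true_and]
  constructor
  · intro hp
    rcases lt_trichotomy (c i) 0 with h' | h' | h'
    · nlinarith
    · simp [h'] at hp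
    · exact h'
  · intro hp; exact mul_pos hp (by linarith)

lemma mem_Aset_of_gt {ι : Type} [DecidableEq ι] {I : Finset ι} {c t : ι → ℝ} {τ : ℝ}
    {i : ι} (hi : i ∈ I) (h : τ < t i) : i ∈ Aset I c t τ ↔ c i < 0 := by
  simp only [Aset, Finset.mem_filter, hi, true_and]
  constructor
  · intro hp
    rcases lt_trichotomy (c i) 0 with h' | h' | h'
    · exact h'
    · simp [h'] at hp
    · nlinarith
  · intro hp; nlinarith

lemma Sval_of_above {ι : Type} [DecidableEq ι] {I : Finset ι} {c t : ι → ℝ} {w : ι → ℤ}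
    {τ : ℝ} (hab : ∀ i ∈ I, t i < τ) :
    Sval I c t w τ = ∑ i ∈ I.filter (fun i => 0 < c i), w i := by
  unfold Sval
  congr 1
  apply Finset.ext
  intro i
  simp only [Finset.mem_filter]
  constructor
  · intro hm
    have hi := Finset.mem_filter.1 hm |>.1
    exact ⟨hi, (mem_Aset_of_lt hi (hab i hi)).1 hm⟩
  · rintro ⟨hi, hp⟩
    exact (mem_Aset_of_lt hi (hab i hi)).2 hp

/-- Walk-up lemma. -/
lemma walkA {ι : Type} [DecidableEq ι] (F : ℤ) (hF : 2 ≤ F) (I : Finset ι)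
    (c t : ι → ℝ) (w : ι → ℤ)
    (ht : Set.InjOn t I)
    (hw : ∀ i ∈ I, w i = 1 ∨ (-(F - 2) ≤ w i ∧ w i ≤ 0))
    (htop : F ≤ ∑ i ∈ I.filter (fun i => 0 < c i), w i) :
    ∀ (n : ℕ) (τ : ℝ), (I.filter (fun i => τ < t i)).card ≤ n →
      (∀ i ∈ I, t i ≠ τ) → Sval I c t w τ ≤ 0 →
      ∃ σ : ℝ, (∀ i ∈ I, t i ≠ σ) ∧ 1 ≤ Sval I c t w σ ∧ Sval I c t w σ ≤ F - 1 := by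
  intro n
  induction n with
  | zero =>
    intro τ hcard hτ hS
    exfalso
    have hem : I.filter (fun i => τ < t i) = ∅ := Finset.card_eq_zero.1 (Nat.le_zero.1 hcard)
    have hab : ∀ i ∈ I, t i < τ := by
      intro i hi
      rcases lt_trichotomy (t i) τ with h | h | h
      · exact h
      · exact absurd h (hτ i hi)
      · exfalso
        have : i ∈ I.filter (fun i => τ < t i) := Finset.mem_filter.2 ⟨hi, h⟩
        simp [hem] at this
    rw [Sval_of_above hab] at hS
    omega
  | succ n ih =>
    intro τ hcard hτ hS
    by_cases hJ : (I.filter (fun i => τ < t i)).Nonempty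
    · set J := I.filter (fun i => τ < t i) with hJdef
      obtain ⟨m, hmJ, hmin⟩ := J.exists_min_image t hJ
      have hmI : m ∈ I := (Finset.mem_filter.1 hmJ).1
      have hτm : τ < t m := (Finset.mem_filter.1 hmJ).2
      set K := I.filter (fun i => t m < t i) with hKdef
      set τ' := if hK : K.Nonempty then (t m + (K.image t).min' (hK.image t)) / 2
        else t m + 1 with hτ'def
      have hKmin : ∀ (hK : K.Nonempty), t m < (K.image t).min' (hK.image t) := by
        intro hK
        obtain ⟨v, hv⟩ := Finset.mem_image.1 ((K.image t).min'_mem (hK.image t))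
        obtain ⟨hvK, hveq⟩ := hv
        rw [← hveq]
        exact (Finset.mem_filter.1 hvK).2
      have hmτ' : t m < τ' := by
        rw [hτ'def]
        split_ifs with hK
        · have := hKmin hK; linarith
        · linarith
      have hKbig : ∀ i ∈ K, τ' < t i := by
        intro i hiK
        have hiI := (Finset.mem_filter.1 hiK).1
        have himt : t m < t i := (Finset.mem_filter.1 hiK).2
        rw [hτ'def]
        split_ifs with hK
        · have hle : (K.image t).min' (hK.image t) ≤ t i :=
            Finset.min'_le _ _ (Finset.mem_image_of_mem t hiK)
          have := hKmin hK
          linarith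
        · exact absurd ⟨i, hiK⟩ hK
      have trich : ∀ i ∈ I, t i < τ ∨ t i = t m ∨ τ' < t i := by
        intro i hi
        rcases lt_trichotomy (t i) τ with h | h | h
        · exact Or.inl h
        · exact absurd h (hτ i hi)
        · have hiJ : i ∈ J := Finset.mem_filter.2 ⟨hi, h⟩
          rcases eq_or_lt_of_le (hmin i hiJ) with h' | h'
          · exact Or.inr (Or.inl h'.symm)
          · exact Or.inr (Or.inr (hKbig i (Finset.mem_filter.2 ⟨hi, h'⟩)))
      have hτ'nc : ∀ i ∈ I, t i ≠ τ' := by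
        intro i hi
        rcases trich i hi with h | h | h
        · intro he; rw [he] at h; linarith
        · intro he; rw [he] at h; linarith
        · exact ne_of_gt h
      -- membership unchanged except at m
      have hsame : ∀ i ∈ I, i ≠ m → (i ∈ Aset I c t τ' ↔ i ∈ Aset I c t τ) := by
        intro i hi him
        rcases trich i hi with h | h | h
        · rw [mem_Aset_of_lt hi h, mem_Aset_of_lt hi (h.trans (by linarith))]
        · exact absurd (ht hi hmI h) him
        · rw [mem_Aset_of_gt hi h, mem_Aset_of_gt hi (by linarith)]
      have herase : (Aset I c t τ').erase m = (Aset I c t τ).erase m := by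
        apply Finset.ext
        intro i
        simp only [Finset.mem_erase]
        constructor
        · rintro ⟨him, hm⟩
          exact ⟨him, (hsame i (Finset.mem_filter.1 hm).1 him).1 hm⟩
        · rintro ⟨him, hm⟩
          exact ⟨him, (hsame i (Finset.mem_filter.1 hm).1 him).2 hm⟩
      have hsum : ∀ (τ₀ : ℝ), Sval I c t w τ₀ =
          (∑ i ∈ (Aset I c t τ₀).erase m, w i) + (if m ∈ Aset I c t τ₀ then w m else 0) := by
        intro τ₀
        by_cases hm : m ∈ Aset I c t τ₀
        · rw [if_pos hm, Sval]
          exact (Finset.sum_erase_add _ _ hm).symm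
        · rw [if_neg hm, Finset.erase_eq_of_notMem hm, add_zero, Sval]
      have hmem' : m ∈ Aset I c t τ' ↔ 0 < c m := mem_Aset_of_lt hmI hmτ'
      have hmem : m ∈ Aset I c t τ ↔ c m < 0 := mem_Aset_of_gt hmI hτm
      have hdiff : Sval I c t w τ' - Sval I c t w τ = 
          (if m ∈ Aset I c t τ' then w m else 0) - (if m ∈ Aset I c t τ then w m else 0) := by
        rw [hsum τ', hsum τ, herase]; ring
      have hwm : w m = 1 ∨ (-(F - 2) ≤ w m ∧ w m ≤ 0) := hw m hmI
      have habs : Sval I c t w τ' ≤ Sval I c t w τ + (F-1) ∧ 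
          Sval I c t w τ - (F-1) ≤ Sval I c t w τ' := by
        constructor <;>
        · rcases hwm with h | h <;> split_ifs at hdiff <;> omega
      by_cases hpos : 1 ≤ Sval I c t w τ'
      · exact ⟨τ', hτ'nc, hpos, by omega⟩
      · -- recurse
        apply ih τ' _ hτ'nc (by omega)
        have hsub : I.filter (fun i => τ' < t i) ⊆ J.erase m := by
          intro i hi
          obtain ⟨hiI, hit⟩ := Finset.mem_filter.1 hi
          refine Finset.mem_erase.2 ⟨?_, Finset.mem_filter.2 ⟨hiI, by linarith⟩⟩
          intro he; rw [he] at hit; linarith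
        calc (I.filter (fun i => τ' < t i)).card ≤ (J.erase m).card := Finset.card_le_card hsub
          _ = J.card - 1 := Finset.card_erase_of_mem hmJ
          _ ≤ n := by omega
    · exfalso
      have hab : ∀ i ∈ I, t i < τ := by
        intro i hi
        rcases lt_trichotomy (t i) τ with h | h | h
        · exact h
        · exact absurd h (hτ i hi)
        · exact absurd ⟨i, Finset.mem_filter.2 ⟨hi, h⟩⟩ hJ
      rw [Sval_of_above hab] at hS
      omega

/-- The sweeping lemma: some noncritical parameter puts weight in `[1, F-1]` on the
positive side. -/
lemma sweep {ι : Type} [DecidableEq ι] (F : ℤ) (hF : 2 ≤ F) (I : Finset ι)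
    (c t : ι → ℝ) (w : ι → ℤ)
    (hc : ∀ i ∈ I, c i ≠ 0)
    (ht : Set.InjOn t I)
    (hsum : ∑ i ∈ I, w i = F)
    (hw : ∀ i ∈ I, w i = 1 ∨ (-(F - 2) ≤ w i ∧ w i ≤ 0)) :
    ∃ τ : ℝ, (∀ i ∈ I, t i ≠ τ) ∧ 1 ≤ Sval I c t w τ ∧ Sval I c t w τ ≤ F - 1 := by
  classical
  have hIne : I.Nonempty := by
    rcases Finset.eq_empty_or_nonempty I with h | h
    · exfalso; rw [h] at hsum; simp at hsum; omega
    · exact h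
  -- the two extreme sums
  have hsplit : (∑ i ∈ I.filter (fun i => 0 < c i), w i) +
      (∑ i ∈ I.filter (fun i => c i < 0), w i) = F := by
    rw [← hsum]
    rw [← Finset.sum_filter_add_sum_filter_not I (fun i => 0 < c i)]
    congr 1
    apply Finset.sum_congr _ (fun _ _ => rfl)
    apply Finset.filter_congr
    intro i hi
    constructor
    · intro h
      exact not_lt.2 h.le
    · intro h
      exact lt_of_le_of_ne (not_lt.1 h) (hc i hi)
  set Vtop := ∑ i ∈ I.filter (fun i => 0 < c i), w i with hVtop
  set Vbot := ∑ i ∈ I.filter (fun i => c i < 0), w i with hVbot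
  -- a value below all criticals
  obtain ⟨mi, hmiI, hmimin⟩ := I.exists_min_image t hIne
  set τ₀ := t mi - 1 with hτ₀
  have hτ₀lt : ∀ i ∈ I, τ₀ < t i := fun i hi => by
    have := hmimin i hi; rw [hτ₀]; linarith
  have hSbot : Sval I c t w τ₀ = Vbot := by
    unfold Sval
    congr 1
    apply Finset.ext
    intro i
    constructor
    · intro hm
      have hi := (Finset.mem_filter.1 hm).1
      exact Finset.mem_filter.2 ⟨hi, (mem_Aset_of_gt hi (hτ₀lt i hi)).1 hm⟩
    · intro hm
      obtain ⟨hi, h⟩ := Finset.mem_filter.1 hm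
      exact (mem_Aset_of_gt hi (hτ₀lt i hi)).2 h
  by_cases h1 : 1 ≤ Vbot ∧ Vbot ≤ F - 1
  · exact ⟨τ₀, fun i hi => (ne_of_gt (hτ₀lt i hi)), by rw [hSbot]; exact h1.1,
      by rw [hSbot]; exact h1.2⟩
  by_cases h2 : Vbot ≤ 0
  · -- walk up from the bottom
    exact walkA F hF I c t w ht hw (by omega) (I.filter (fun i => τ₀ < t i)).card τ₀ le_rfl
      (fun i hi => (ne_of_gt (hτ₀lt i hi))) (by omega)
  · -- Vbot ≥ F : mirror the configuration
    have hVb : F ≤ Vbot := by omega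
    have hVt : Vtop ≤ 0 := by omega
    set c' : ι → ℝ := fun i => -(c i) with hc'
    set t' : ι → ℝ := fun i => -(t i) with ht'
    have hS' : ∀ σ : ℝ, Sval I c' t' w σ = Sval I c t w (-σ) := by
      intro σ
      unfold Sval
      congr 1
      apply Finset.ext
      intro i
      simp only [Aset, Finset.mem_filter, hc', ht']
      constructor
      · rintro ⟨hi, h⟩; exact ⟨hi, by nlinarith⟩
      · rintro ⟨hi, h⟩; exact ⟨hi, by nlinarith⟩
    have ht'inj : Set.InjOn t' I := by
      intro i hi j hj h
      apply ht hi hj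
      simpa [ht'] using h
    have htop' : F ≤ ∑ i ∈ I.filter (fun i => 0 < c' i), w i := by
      have : I.filter (fun i => 0 < c' i) = I.filter (fun i => c i < 0) := by
        apply Finset.filter_congr
        intro i _
        simp [hc']
      rw [this]; exact hVb
    obtain ⟨mx, hmxI, hmxmax⟩ := I.exists_max_image t hIne
    set σ₀ := -(t mx + 1) with hσ₀
    have hσ₀lt : ∀ i ∈ I, t' i ≠ σ₀ := by
      intro i hi
      have hle := hmxmax i hi
      rw [ht', hσ₀]
      intro h
      have heq : t i = t mx + 1 := by
        have := neg_injective h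
        linarith [this]
      linarith
    have hScheck : Sval I c' t' w σ₀ ≤ 0 := by
      rw [hS' σ₀]
      have : Sval I c t w (-σ₀) = Vtop := by
        apply Sval_of_above
        intro i hi
        have := hmxmax i hi
        rw [hσ₀]; simp only [neg_neg]; linarith
      omega
    have hcard0 : (I.filter (fun i => σ₀ < t' i)).card ≤ (I.filter (fun i => σ₀ < t' i)).card :=
      le_rfl
    obtain ⟨σ, hσnc, hσ1, hσ2⟩ := walkA F hF I c' t' w ht'inj hw htop'
      (I.filter (fun i => σ₀ < t' i)).card σ₀ le_rfl (fun i hi => hσ₀lt i hi) hScheck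
    refine ⟨-σ, ?_, ?_, ?_⟩
    · intro i hi
      have hne := hσnc i hi
      intro h
      apply hne
      simp only [ht']
      rw [h, neg_neg]
    · rw [← hS' σ]; exact hσ1
    · rw [← hS' σ]; exact hσ2



lemma Pt.ext' {p q : Pt} (h0 : p 0 = q 0) (h1 : p 1 = q 1) : p = q := by
  ext i; fin_cases i <;> assumption

lemma genpos_mono {S S' : Set Pt} (h : S' ⊆ S) (hgp : GenPos S) : GenPos S' :=
  fun p q r hp hq hr h1 h2 h3 => hgp p q r (h hp) (h hq) (h hr) h1 h2 h3

lemma genpos_det {S : Set Pt} (hgp : GenPos S) {r p q : Pt} (hr : r ∈ S) (hp : p ∈ S)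
    (hq : q ∈ S) (hrp : r ≠ p) (hrq : r ≠ q) (hpq : p ≠ q) :
    (p 0 - r 0) * (q 1 - r 1) - (q 0 - r 0) * (p 1 - r 1) ≠ 0 := by
  intro hdet
  apply hgp r p q hr hp hq hrp hrq hpq
  rw [collinear_iff_of_mem (show r ∈ ({r, p, q} : Set Pt) by simp)]
  refine ⟨p - r, ?_⟩
  have key : ∃ a : ℝ, q = a • (p - r) + r := by
    by_cases hX : p 0 - r 0 = 0
    · have hY : p 1 - r 1 ≠ 0 := by
        intro hY
        apply hrp
        exact (Pt.ext' (by linarith) (by linarith)).symm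
      have hq0 : q 0 - r 0 = 0 := by
        have : (q 0 - r 0) * (p 1 - r 1) = 0 := by linear_combination (q 1 - r 1) * hX - hdet
        rcases mul_eq_zero.1 this with h | h
        · exact h
        · exact absurd h hY
      refine ⟨(q 1 - r 1) / (p 1 - r 1), Pt.ext' ?_ ?_⟩
      · show q 0 = (q 1 - r 1) / (p 1 - r 1) * (p 0 - r 0) + r 0
        rw [hX]
        simp
        linarith
      · show q 1 = (q 1 - r 1) / (p 1 - r 1) * (p 1 - r 1) + r 1
        rw [div_mul_cancel₀ _ hY]
        ring
    · refine ⟨(q 0 - r 0) / (p 0 - r 0), Pt.ext' ?_ ?_⟩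
      · show q 0 = (q 0 - r 0) / (p 0 - r 0) * (p 0 - r 0) + r 0
        rw [div_mul_cancel₀ _ hX]
        ring
      · show q 1 = (q 0 - r 0) / (p 0 - r 0) * (p 1 - r 1) + r 1
        field_simp
        linear_combination hdet
  obtain ⟨a, ha⟩ := key
  intro x hx
  simp only [Set.mem_insert_iff, Set.mem_singleton_iff] at hx
  rcases hx with rfl | rfl | rfl
  · exact ⟨0, by simp⟩
  · exact ⟨1, by simp⟩
  · exact ⟨a, by rw [ha]; simp⟩

/-- Value of the affine functional along an open segment: negative side. -/
lemma seg_neg (r : Pt) (u₀ u₁ : ℝ) {a b : Pt}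
    (ha : (a 0 - r 0) * u₀ + (a 1 - r 1) * u₁ ≤ 0)
    (hb : (b 0 - r 0) * u₀ + (b 1 - r 1) * u₁ ≤ 0)
    (hne : (a 0 - r 0) * u₀ + (a 1 - r 1) * u₁ ≠ 0 ∨ (b 0 - r 0) * u₀ + (b 1 - r 1) * u₁ ≠ 0)
    {x : Pt} (hx : x ∈ openSegment ℝ a b) :
    (x 0 - r 0) * u₀ + (x 1 - r 1) * u₁ < 0 := by
  obtain ⟨s, t, hs, ht, hst, hxe⟩ := hx
  obtain rfl : t = 1 - s := by linarith
  have hs1 : s < 1 := by linarith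
  have h0 : x 0 = s * a 0 + (1 - s) * b 0 := by rw [← hxe]; rfl
  have h1 : x 1 = s * a 1 + (1 - s) * b 1 := by rw [← hxe]; rfl
  rw [h0, h1]
  rcases hne with h | h
  · have ha' : (a 0 - r 0) * u₀ + (a 1 - r 1) * u₁ < 0 := lt_of_le_of_ne ha h
    nlinarith
  · have hb' : (b 0 - r 0) * u₀ + (b 1 - r 1) * u₁ < 0 := lt_of_le_of_ne hb h
    nlinarith

lemma seg_pos (r : Pt) (u₀ u₁ : ℝ) {a b : Pt}
    (ha : 0 ≤ (a 0 - r 0) * u₀ + (a 1 - r 1) * u₁)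
    (hb : 0 ≤ (b 0 - r 0) * u₀ + (b 1 - r 1) * u₁)
    (hne : (a 0 - r 0) * u₀ + (a 1 - r 1) * u₁ ≠ 0 ∨ (b 0 - r 0) * u₀ + (b 1 - r 1) * u₁ ≠ 0)
    {x : Pt} (hx : x ∈ openSegment ℝ a b) :
    0 < (x 0 - r 0) * u₀ + (x 1 - r 1) * u₁ := by
  have := seg_neg r (-u₀) (-u₁) (a := a) (b := b) (by linarith) (by linarith)
    (by rcases hne with h | h; · left; intro hc; apply h; linarith
        · right; intro hc; apply h; linarith) hx
  linarith


set_option linter.unusedSectionVars false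

open SimpleGraph

variable {V : Type*} [DecidableEq V]

lemma stuck {S T₁ T₂ : SimpleGraph V} {Q₁ Q₂ : Set V} {r : V}
    (hS : ∀ x y, S.Adj x y → T₁.Adj x y ∨ T₂.Adj x y)
    (hQ1 : ∀ x y, T₁.Adj x y → x ∈ Q₁ ∧ y ∈ Q₁)
    (hQ2 : ∀ x y, T₂.Adj x y → x ∈ Q₂ ∧ y ∈ Q₂)
    (hQ : ∀ x, x ∈ Q₁ → x ∈ Q₂ → x = r) :
    ∀ {a b : V} (p : S.Walk a b), a ∈ Q₂ → a ≠ r → r ∉ p.support → b ∈ Q₂ ∧ b ≠ r := by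
  intro a b p
  induction p with
  | nil => exact fun h1 h2 _ => ⟨h1, h2⟩
  | @cons u v w h q ih =>
    intro h1 h2 h3
    rw [SimpleGraph.Walk.support_cons] at h3
    have h3' : r ∉ q.support := fun hr => h3 (List.mem_cons_of_mem _ hr)
    have hvQ2 : v ∈ Q₂ := by
      rcases hS _ _ h with h' | h'
      · exact absurd (hQ u (hQ1 _ _ h').1 h1) h2
      · exact (hQ2 _ _ h').2
    have hvr : v ≠ r := fun hv => h3' (hv ▸ q.start_mem_support)
    exact ih hvQ2 hvr h3'

lemma edges_side {S T₁ T₂ : SimpleGraph V} {Q₁ Q₂ : Set V} {r : V}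
    (hS : ∀ x y, S.Adj x y → T₁.Adj x y ∨ T₂.Adj x y)
    (hQ1 : ∀ x y, T₁.Adj x y → x ∈ Q₁ ∧ y ∈ Q₁)
    (hQ2 : ∀ x y, T₂.Adj x y → x ∈ Q₂ ∧ y ∈ Q₂)
    (hQ : ∀ x, x ∈ Q₁ → x ∈ Q₂ → x = r) :
    ∀ (n : ℕ) {a b : V} (p : S.Walk a b), p.length ≤ n →
      a ∈ Q₁ → a ≠ r → b ∈ Q₁ → b ≠ r → p.support.count r ≤ 1 →
      ∀ e ∈ p.edges, e ∈ T₁.edgeSet := by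
  intro n
  induction n with
  | zero =>
    intro a b p hl ha har hb hbr hcnt e he
    cases p with
    | nil => simp at he
    | cons h q => simp [SimpleGraph.Walk.length_cons] at hl
  | succ n ih =>
    intro a b p hl ha har hb hbr hcnt e he
    cases p with
    | nil => simp at he
    | @cons u v w h q =>
      have hT1 : T₁.Adj a v := by
        rcases hS _ _ h with h' | h'
        · exact h'
        · exact absurd (hQ a ha (hQ2 _ _ h').1) har
      have hv1 : v ∈ Q₁ := (hQ1 _ _ hT1).2
      have hcq : q.support.count r ≤ 1 := by
        rw [SimpleGraph.Walk.support_cons, List.count_cons] at hcnt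
        omega
      rw [SimpleGraph.Walk.edges_cons] at he
      rcases List.mem_cons.1 he with rfl | he'
      · exact hT1
      by_cases hvr : v = r
      · cases q with
        | nil => exact absurd (hvr ▸ rfl) hbr
        | @cons u' v' w' h₂ q₂ =>
          have hrq2 : r ∉ q₂.support := by
            rw [SimpleGraph.Walk.support_cons, List.count_cons] at hcq
            simp only [hvr, beq_self_eq_true, if_true] at hcq
            rw [← List.count_eq_zero]
            omega
          have hT1' : T₁.Adj v v' := by
            rcases hS _ _ h₂ with h' | h'
            · exact h'
            · exfalso
              have hv'Q2 : v' ∈ Q₂ := (hQ2 _ _ h').2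
              have hv'r : v' ≠ r := fun hv => hrq2 (hv ▸ q₂.start_mem_support)
              obtain ⟨hbQ2, hbr'⟩ := stuck hS hQ1 hQ2 hQ q₂ hv'Q2 hv'r hrq2
              exact hbr' (hQ b hb hbQ2)
          have hv'1 : v' ∈ Q₁ := (hQ1 _ _ hT1').2
          have hv'r : v' ≠ r := by
            intro hv
            exact hT1'.ne (by rw [hv, hvr])
          rw [SimpleGraph.Walk.edges_cons] at he'
          rcases List.mem_cons.1 he' with rfl | he''
          · exact hT1'
          · apply ih q₂ ?_ hv'1 hv'r hb hbr ?_ e he''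
            · have : q₂.length + 2 ≤ n + 1 := by
                simpa [SimpleGraph.Walk.length_cons] using hl
              omega
            · rw [← List.count_eq_zero] at hrq2
              omega
      · apply ih q ?_ hv1 hvr hb hbr hcq e he'
        have : q.length + 1 ≤ n + 1 := by simpa [SimpleGraph.Walk.length_cons] using hl
        omega

lemma sup_acyclic {T₁ T₂ : SimpleGraph V} {Q₁ Q₂ : Set V} {r : V}
    (h₁ : T₁.IsAcyclic) (h₂ : T₂.IsAcyclic)
    (hQ1 : ∀ x y, T₁.Adj x y → x ∈ Q₁ ∧ y ∈ Q₁)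
    (hQ2 : ∀ x y, T₂.Adj x y → x ∈ Q₂ ∧ y ∈ Q₂)
    (hQ : ∀ x, x ∈ Q₁ → x ∈ Q₂ → x = r) :
    (T₁ ⊔ T₂).IsAcyclic := by
  classical
  intro v c hc
  have hS : ∀ x y : V, (T₁ ⊔ T₂).Adj x y → T₁.Adj x y ∨ T₂.Adj x y :=
    fun x y h => (SimpleGraph.sup_adj _ _ _ _).1 h
  -- find a support vertex different from r
  have h2 : 2 ≤ c.support.tail.length := by
    have h3 := hc.three_le_length
    have hsup : c.support.length = c.length + 1 := SimpleGraph.Walk.length_support c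
    have : c.support.tail.length = c.length := by
      rw [List.length_tail, hsup]
      omega
    omega
  obtain ⟨x, l₁, hx⟩ : ∃ x l₁, c.support.tail = x :: l₁ := by
    cases h : c.support.tail with
    | nil => rw [h] at h2; simp at h2
    | cons a l => exact ⟨a, l, rfl⟩
  obtain ⟨y, l₂, hy⟩ : ∃ y l₂, l₁ = y :: l₂ := by
    cases h : l₁ with
    | nil => rw [hx, h] at h2; simp at h2
    | cons a l => exact ⟨a, l, rfl⟩
  have hnd := hc.support_nodup
  rw [hx, hy, List.nodup_cons] at hnd
  have hxy : x ≠ y := fun h => hnd.1 (h ▸ List.mem_cons_self)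
  obtain ⟨u, hu, hur⟩ : ∃ u ∈ c.support, u ≠ r := by
    by_cases hxr : x = r
    · refine ⟨y, ?_, fun h => hxy (by rw [hxr, h])⟩
      rw [c.support_eq_cons, hx, hy]
      exact List.mem_cons_of_mem _ (List.mem_cons_of_mem _ (List.mem_cons_self))
    · refine ⟨x, ?_, hxr⟩
      rw [c.support_eq_cons, hx]
      exact List.mem_cons_of_mem _ (List.mem_cons_self)
  set c' := c.rotate u hu with hc'def
  have hc' : c'.IsCycle := hc.rotate hu
  have hcnt : c'.support.count r ≤ 1 := by
    rw [c'.support_eq_cons, List.count_cons]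
    have := List.nodup_iff_count_le_one.1 hc'.support_nodup r
    have hne : ((u == r) = true) = False := by
      simp [hur]
    simp only [hne, if_false]
    omega
  cases hh : c' with
  | nil => exact hc'.ne_nil hh
  | @cons u₀ v₀ w₀ h q =>
    have huQ : u ∈ Q₁ ∨ u ∈ Q₂ := by
      rcases hS _ _ h with h' | h'
      · exact Or.inl (hQ1 _ _ h').1
      · exact Or.inr (hQ2 _ _ h').1
    rcases huQ with huQ1 | huQ2
    · have hedges : ∀ e ∈ c'.edges, e ∈ T₁.edgeSet :=
        edges_side hS hQ1 hQ2 hQ c'.length c' le_rfl huQ1 hur huQ1 hur hcnt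
      exact h₁ (c'.transfer T₁ hedges) (hc'.transfer hedges)
    · have hS' : ∀ x y : V, (T₁ ⊔ T₂).Adj x y → T₂.Adj x y ∨ T₁.Adj x y :=
        fun x y h => Or.symm (hS x y h)
      have hQ' : ∀ x, x ∈ Q₂ → x ∈ Q₁ → x = r := fun x a b => hQ x b a
      have hedges : ∀ e ∈ c'.edges, e ∈ T₂.edgeSet :=
        edges_side hS' hQ2 hQ1 hQ' c'.length c' le_rfl huQ2 hur huQ2 hur hcnt
      exact h₂ (c'.transfer T₂ hedges) (hc'.transfer hedges)

lemma degr_sup_left {T₁ T₂ : SimpleGraph V} {Q₂ : Set V} {v : V}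
    (hQ2 : ∀ x y, T₂.Adj x y → x ∈ Q₂ ∧ y ∈ Q₂) (hv : v ∉ Q₂) :
    degr (T₁ ⊔ T₂) v = degr T₁ v := by
  unfold degr
  apply Nat.card_congr
  apply Equiv.subtypeEquivRight
  intro w
  simp only [SimpleGraph.sup_adj]
  constructor
  · rintro (h | h)
    · exact h
    · exact absurd (hQ2 _ _ h).1 hv
  · exact Or.inl

lemma degr_sup_add {T₁ T₂ : SimpleGraph V} {r : V} {Q₁ Q₂ : Set V}
    (hQ1 : ∀ x y, T₁.Adj x y → x ∈ Q₁ ∧ y ∈ Q₁)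
    (hQ2 : ∀ x y, T₂.Adj x y → x ∈ Q₂ ∧ y ∈ Q₂)
    (hQ : ∀ x, x ∈ Q₁ → x ∈ Q₂ → x = r)
    (hfin1 : Q₁.Finite) (hfin2 : Q₂.Finite) :
    degr (T₁ ⊔ T₂) r = degr T₁ r + degr T₂ r := by
  classical
  have hdisj : ∀ w, T₁.Adj r w → T₂.Adj r w → False := by
    intro w hw1 hw2
    have hwr : w = r := hQ w (hQ1 _ _ hw1).2 (hQ2 _ _ hw2).2
    subst hwr
    exact (T₁.loopless.irrefl w) hw1
  haveI hf1 : Finite {w // T₁.Adj r w} :=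
    Set.Finite.to_subtype (hfin1.subset (fun w hw => (hQ1 _ _ hw).2))
  haveI hf2 : Finite {w // T₂.Adj r w} :=
    Set.Finite.to_subtype (hfin2.subset (fun w hw => (hQ2 _ _ hw).2))
  unfold degr
  rw [Nat.card_congr (Equiv.subtypeEquivRight
    (fun w => (SimpleGraph.sup_adj _ _ _ _ : (T₁ ⊔ T₂).Adj r w ↔ _)))]
  have e : {w // T₁.Adj r w ∨ T₂.Adj r w} ≃ {w // T₁.Adj r w} ⊕ {w // T₂.Adj r w} := by
    refine ⟨fun w => if h : T₁.Adj r w.1 then Sum.inl ⟨w.1, h⟩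
      else Sum.inr ⟨w.1, w.2.resolve_left h⟩,
      fun s => Sum.elim (fun x => ⟨x.1, Or.inl x.2⟩) (fun x => ⟨x.1, Or.inr x.2⟩) s, ?_, ?_⟩
    · intro w
      by_cases h : T₁.Adj r w.1
      · simp [h]
      · simp [h]
    · intro s
      cases s with
      | inl x => simp [x.2]
      | inr x =>
        have : ¬ T₁.Adj r x.1 := fun h => hdisj x.1 h x.2
        simp [this]
  rw [Nat.card_congr e, Nat.card_sum]

/-- The graph with a single edge. -/
noncomputable def singleEdge (x y : V) : SimpleGraph V := SimpleGraph.fromEdgeSet {s(x, y)}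

lemma singleEdge_adj {x y a b : V} (hxy : x ≠ y) :
    (singleEdge x y).Adj a b ↔ (a = x ∧ b = y) ∨ (a = y ∧ b = x) := by
  unfold singleEdge
  rw [SimpleGraph.fromEdgeSet_adj]
  simp only [Set.mem_singleton_iff, Sym2.eq_iff]
  constructor
  · rintro ⟨(⟨rfl, rfl⟩ | ⟨rfl, rfl⟩), h⟩
    · exact Or.inl ⟨rfl, rfl⟩
    · exact Or.inr ⟨rfl, rfl⟩
  · rintro (⟨rfl, rfl⟩ | ⟨rfl, rfl⟩)
    · exact ⟨Or.inl ⟨rfl, rfl⟩, hxy⟩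
    · exact ⟨Or.inr ⟨rfl, rfl⟩, hxy.symm⟩

lemma singleEdge_degr_left {x y : V} (hxy : x ≠ y) : degr (singleEdge x y) x = 1 := by
  unfold degr
  have e : {w // (singleEdge x y).Adj x w} ≃ {w // w = y} := by
    apply Equiv.subtypeEquivRight
    intro w
    rw [singleEdge_adj hxy]
    constructor
    · rintro (⟨-, rfl⟩ | ⟨h, -⟩)
      · rfl
      · exact absurd h hxy
    · rintro rfl
      exact Or.inl ⟨rfl, rfl⟩
  rw [Nat.card_congr e]
  haveI : Unique {w // w = y} := ⟨⟨⟨y, rfl⟩⟩, by rintro ⟨w, rfl⟩; rfl⟩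
  exact Nat.card_unique

lemma singleEdge_degr_right {x y : V} (hxy : x ≠ y) : degr (singleEdge x y) y = 1 := by
  have : singleEdge x y = singleEdge y x := by
    unfold singleEdge
    rw [Sym2.eq_swap]
  rw [this]
  exact singleEdge_degr_left hxy.symm

lemma singleEdge_acyclic {x y : V} (hxy : x ≠ y) : (singleEdge x y).IsAcyclic := by
  intro v c hc
  have h3 := hc.three_le_length
  have hel : c.edges.length = c.length := c.length_edges
  obtain ⟨e₁, e₂, l, hl⟩ : ∃ e₁ e₂ l, c.edges = e₁ :: e₂ :: l := by
    cases h : c.edges with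
    | nil => rw [h] at hel; simp at hel; omega
    | cons a t =>
      cases h' : t with
      | nil => rw [h, h'] at hel; simp at hel; omega
      | cons b t' => exact ⟨a, b, t', by rw [h'] at h⟩
  have hnd := hc.edges_nodup
  rw [hl, List.nodup_cons] at hnd
  have hne : e₁ ≠ e₂ := fun h => hnd.1 (h ▸ List.mem_cons_self)
  have hmem : ∀ e ∈ c.edges, e = s(x, y) := by
    intro e he
    have := c.edges_subset_edgeSet he
    unfold singleEdge at this
    rw [SimpleGraph.edgeSet_fromEdgeSet] at this
    exact this.1
  apply hne
  rw [hmem e₁ (by rw [hl]; simp), hmem e₂ (by rw [hl]; simp)]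


set_option maxHeartbeats 1000000

/-- Invariants carried through the induction, phrased for graphs on all of `Pt`. -/
def GoodT (R B : Finset Pt) (f : Pt → ℕ) (T : SimpleGraph Pt) : Prop :=
  (∀ x y : Pt, T.Adj x y → x ∈ R ∪ B ∧ y ∈ R ∪ B) ∧
  (∀ x ∈ R ∪ B, ∀ y ∈ R ∪ B, T.Reachable x y) ∧
  T.IsAcyclic ∧
  (∀ a b c d : Pt, T.Adj a b → T.Adj c d → s(a, b) ≠ s(c, d) →
     openSegment ℝ a b ∩ openSegment ℝ c d = ∅) ∧
  (∀ x ∈ B, degr T x = 1) ∧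
  (∀ x ∈ R, degr T x = f x)

lemma base_case (R B : Finset Pt) (f : Pt → ℕ) (hR : R = ∅) (hB2 : B.card = 2) :
    ∃ T, GoodT R B f T := by
  obtain ⟨x, y, hxy, hBxy⟩ := Finset.card_eq_two.1 hB2
  have hmem : ∀ a : Pt, a ∈ R ∪ B → a = x ∨ a = y := by
    intro a ha
    rw [hR, hBxy] at ha
    simpa using ha
  have hxB : x ∈ B := by rw [hBxy]; simp
  have hyB : y ∈ B := by rw [hBxy]; simp
  refine ⟨singleEdge x y, ?_, ?_, singleEdge_acyclic hxy, ?_, ?_, ?_⟩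
  · intro a b hab
    rw [singleEdge_adj hxy] at hab
    rcases hab with ⟨rfl, rfl⟩ | ⟨rfl, rfl⟩
    · exact ⟨Finset.mem_union_right _ hxB, Finset.mem_union_right _ hyB⟩
    · exact ⟨Finset.mem_union_right _ hyB, Finset.mem_union_right _ hxB⟩
  · intro a ha b hb
    have hadj : (singleEdge x y).Adj x y := (singleEdge_adj hxy).2 (Or.inl ⟨rfl, rfl⟩)
    rcases hmem a ha with rfl | rfl <;> rcases hmem b hb with rfl | rfl
    · rfl
    · exact hadj.reachable
    · exact hadj.symm.reachable
    · rfl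
  · intro a b c d hab hcd hne
    exfalso
    apply hne
    rw [singleEdge_adj hxy] at hab hcd
    rcases hab with ⟨rfl, rfl⟩ | ⟨rfl, rfl⟩ <;> rcases hcd with ⟨rfl, rfl⟩ | ⟨rfl, rfl⟩
    · rfl
    · exact Sym2.eq_swap
    · exact Sym2.eq_swap
    · rfl
  · intro b hb
    rcases hmem b (Finset.mem_union_right _ hb) with rfl | rfl
    · exact singleEdge_degr_left hxy
    · exact singleEdge_degr_right hxy
  · intro a ha
    rw [hR] at ha
    simp at ha

lemma main_ind : ∀ (n : ℕ) (R B : Finset Pt) (f : Pt → ℕ), (R ∪ B).card ≤ n →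
    Disjoint R B → GenPos ↑(R ∪ B) → (∀ x ∈ R, 2 ≤ f x) →
    B.card = ∑ x ∈ R, (f x - 2) + 2 → 2 ≤ B.card → ∃ T, GoodT R B f T := by
  intro n
  induction n with
  | zero =>
    intro R B f hcard hdisj hgp hf hB hB2
    exfalso
    have := Finset.card_le_card (Finset.subset_union_right (s₁ := R) (s₂ := B))
    omega
  | succ n ih =>
    intro R B f hcard hdisj hgp hf hB hB2
    rcases Finset.eq_empty_or_nonempty R with hR | hRne
    · exact base_case R B f hR (by rw [hB, hR]; simp)
    obtain ⟨r, hrR, hrmax⟩ := R.exists_max_image f hRne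
    set F : ℤ := (f r : ℤ) with hFdef
    have hF2 : 2 ≤ F := by
      have := hf r hrR
      omega
    set P := R ∪ B with hPdef
    have hrP : r ∈ P := Finset.mem_union_left _ hrR
    have hrB : r ∉ B := fun h => (Finset.disjoint_left.1 hdisj) hrR h
    set I := P.erase r with hIdef
    set X : Pt → ℝ := fun p => p 0 - r 0 with hXdef
    set Y : Pt → ℝ := fun p => p 1 - r 1 with hYdef
    -- choose a generic slope sl
    obtain ⟨sl, hsl⟩ := Infinite.exists_notMem_finset
      ((I.filter (fun p => Y p ≠ 0)).image (fun p => -(X p) / (Y p)))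
    set cc : Pt → ℝ := fun p => X p + sl * Y p with hccdef
    have hcne : ∀ p ∈ I, cc p ≠ 0 := by
      intro p hpI hc0
      have hpr : p ≠ r := (Finset.mem_erase.1 hpI).1
      by_cases hYp : Y p = 0
      · apply hpr
        apply Pt.ext'
        · have : X p = 0 := by
            rw [hccdef] at hc0
            simp only at hc0
            rw [hYp] at hc0
            linarith
          rw [hXdef] at this
          simp only at this
          linarith
        · rw [hYdef] at hYp
          simp only at hYp
          linarith
      · apply hsl
        apply Finset.mem_image.2
        refine ⟨p, Finset.mem_filter.2 ⟨hpI, hYp⟩, ?_⟩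
        rw [hccdef] at hc0
        simp only at hc0
        field_simp
        linarith
    set tc : Pt → ℝ := fun p => (sl * X p - Y p) / cc p with htcdef
    have htinj : Set.InjOn tc ↑I := by
      intro p hp q hq heq
      by_contra hpq
      have hpI : p ∈ I := hp
      have hqI : q ∈ I := hq
      have hpP : p ∈ P := Finset.mem_of_mem_erase hpI
      have hqP : q ∈ P := Finset.mem_of_mem_erase hqI
      have hrp : r ≠ p := fun h => (Finset.mem_erase.1 hpI).1 h.symm
      have hrq : r ≠ q := fun h => (Finset.mem_erase.1 hqI).1 h.symm
      have hdet := genpos_det hgp (Finset.mem_coe.2 hrP) (Finset.mem_coe.2 hpP)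
        (Finset.mem_coe.2 hqP) hrp hrq hpq
      apply hdet
      have hcp := hcne p hpI
      have hcq := hcne q hqI
      rw [htcdef] at heq
      simp only at heq
      rw [div_eq_div_iff hcp hcq] at heq
      have hkey : (sl ^ 2 + 1) * (X p * Y q - X q * Y p) = 0 := by
        rw [hccdef] at heq
        simp only at heq
        ring_nf at heq ⊢
        nlinarith [heq]
      have hs1 : sl ^ 2 + 1 > 0 := by positivity
      have hzero : X p * Y q - X q * Y p = 0 := by
        rcases mul_eq_zero.1 hkey with h | h
        · linarith
        · exact h
      rw [hXdef, hYdef] at hzero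
      simp only at hzero
      linarith
    set w : Pt → ℤ := fun p => if p ∈ B then 1 else -((f p : ℤ) - 2) with hwdef
    have hcast : ∀ s : Finset Pt, s ⊆ R →
        ((∑ x ∈ s, (f x - 2) : ℕ) : ℤ) = ∑ x ∈ s, ((f x : ℤ) - 2) := by
      intro s hs
      rw [Nat.cast_sum]
      apply Finset.sum_congr rfl
      intro x hx
      have := hf x (hs hx)
      omega
    have hIeq : I = (R.erase r) ∪ B := by
      apply Finset.ext
      intro x
      simp only [hIdef, hPdef, Finset.mem_erase, Finset.mem_union]
      constructor
      · rintro ⟨hxr, hx | hx⟩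
        · exact Or.inl ⟨hxr, hx⟩
        · exact Or.inr hx
      · rintro (⟨hxr, hx⟩ | hx)
        · exact ⟨hxr, Or.inl hx⟩
        · exact ⟨fun h => hrB (h ▸ hx), Or.inr hx⟩
    have hdisjRB' : Disjoint (R.erase r) B := hdisj.mono_left (R.erase_subset r)
    have hwsum : ∑ p ∈ I, w p = F := by
      rw [hIeq, Finset.sum_union hdisjRB']
      have h1 : ∑ p ∈ R.erase r, w p = -∑ p ∈ R.erase r, ((f p : ℤ) - 2) := by
        rw [← Finset.sum_neg_distrib]
        apply Finset.sum_congr rfl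
        intro x hx
        have hxB : x ∉ B := fun h =>
          (Finset.disjoint_left.1 hdisj) (Finset.mem_of_mem_erase hx) h
        rw [hwdef]
        simp [hxB]
      have h2 : ∑ p ∈ B, w p = (B.card : ℤ) := by
        rw [Finset.card_eq_sum_ones]
        push_cast
        apply Finset.sum_congr rfl
        intro x hx
        rw [hwdef]
        simp [hx]
      rw [h1, h2]
      have h3 : ∑ p ∈ R.erase r, ((f p : ℤ) - 2) + ((f r : ℤ) - 2) = ∑ p ∈ R, ((f p : ℤ) - 2) :=
        Finset.sum_erase_add R _ hrR
      have h4 := hcast R (subset_refl R)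
      omega
    have hwb : ∀ p ∈ I, w p = 1 ∨ (-(F - 2) ≤ w p ∧ w p ≤ 0) := by
      intro p hpI
      by_cases hpB : p ∈ B
      · left; rw [hwdef]; simp [hpB]
      · right
        have hpR : p ∈ R := by
          have := Finset.mem_of_mem_erase (hIdef ▸ hpI)
          rcases Finset.mem_union.1 this with h | h
          · exact h
          · exact absurd h hpB
        have h1 := hf p hpR
        have h2 := hrmax p hpR
        rw [hwdef]
        simp only [hpB, if_false]
        omega
    obtain ⟨τ, hτnc, hS1, hS2⟩ := sweep F hF2 I cc tc w hcne htinj hwsum hwb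
    set G : Pt → ℝ := fun q => (q 0 - r 0) * (τ - sl) + (q 1 - r 1) * (1 + τ * sl) with hGdef
    have hGr : G r = 0 := by rw [hGdef]; simp
    have hGI : ∀ p ∈ I, G p = cc p * (τ - tc p) := by
      intro p hp
      have h1 : cc p * tc p = sl * X p - Y p := by
        rw [htcdef]
        exact mul_div_cancel₀ _ (hcne p hp)
      rw [hGdef, hccdef] at *
      simp only [hXdef, hYdef] at h1 ⊢
      ring_nf
      ring_nf at h1
      linarith [h1]
    have hGne : ∀ p ∈ I, G p ≠ 0 := by
      intro p hp
      rw [hGI p hp]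
      exact mul_ne_zero (hcne p hp) (sub_ne_zero.2 (Ne.symm (hτnc p hp)))
    have hGmem : ∀ p ∈ I, (0 < G p ↔ 0 < cc p * (τ - tc p)) := by
      intro p hp
      rw [hGI p hp]
    -- side finsets
    set Bp := B.filter (fun p => 0 < G p) with hBpdef
    set Bm := B.filter (fun p => G p < 0) with hBmdef
    set Rp := R.filter (fun p => 0 < G p) with hRpdef
    set Rm := R.filter (fun p => G p < 0) with hRmdef
    have hBmem : ∀ p ∈ B, p ∈ I := by
      intro p hp
      rw [hIdef]
      exact Finset.mem_erase.2 ⟨fun h => hrB (h ▸ hp), Finset.mem_union_right _ hp⟩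
    have hRmem : ∀ p ∈ R.erase r, p ∈ I := by
      intro p hp
      rw [hIdef]
      exact Finset.mem_erase.2 ⟨(Finset.mem_erase.1 hp).1,
        Finset.mem_union_left _ (Finset.mem_of_mem_erase hp)⟩
    have hRpr : ∀ p ∈ Rp, p ≠ r := by
      intro p hp h
      have := (Finset.mem_filter.1 hp).2
      rw [h, hGr] at this
      exact lt_irrefl 0 this
    have hRmr : ∀ p ∈ Rm, p ≠ r := by
      intro p hp h
      have := (Finset.mem_filter.1 hp).2
      rw [h, hGr] at this
      exact lt_irrefl 0 this
    set a2 : ℤ := Sval I cc tc w τ with ha2def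
    set a1 : ℤ := F - a2 with ha1def
    have hApos : Aset I cc tc τ = Rp ∪ Bp := by
      apply Finset.ext
      intro p
      simp only [Aset, hRpdef, hBpdef, Finset.mem_filter, Finset.mem_union]
      constructor
      · rintro ⟨hpI, hpos⟩
        have hGp : 0 < G p := (hGmem p hpI).2 hpos
        have hpP : p ∈ P := Finset.mem_of_mem_erase (hIdef ▸ hpI)
        rcases Finset.mem_union.1 hpP with h | h
        · exact Or.inl ⟨h, hGp⟩
        · exact Or.inr ⟨h, hGp⟩
      · rintro (⟨hpR, hpos⟩ | ⟨hpB, hpos⟩)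
        · have hpr : p ≠ r := fun h => by rw [h, hGr] at hpos; exact lt_irrefl 0 hpos
          have hpI : p ∈ I := hRmem p (Finset.mem_erase.2 ⟨hpr, hpR⟩)
          exact ⟨hpI, (hGmem p hpI).1 hpos⟩
        · have hpI : p ∈ I := hBmem p hpB
          exact ⟨hpI, (hGmem p hpI).1 hpos⟩
    have hdisjRpBp : Disjoint Rp Bp :=
      (hdisj.mono_left (Finset.filter_subset _ _)).mono_right (Finset.filter_subset _ _)
    have hdisjRmBm : Disjoint Rm Bm :=
      (hdisj.mono_left (Finset.filter_subset _ _)).mono_right (Finset.filter_subset _ _)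
    have hsumRp : ∀ s : Finset Pt, s ⊆ R → ∑ p ∈ s, w p = -∑ p ∈ s, ((f p : ℤ) - 2) := by
      intro s hs
      rw [← Finset.sum_neg_distrib]
      apply Finset.sum_congr rfl
      intro x hx
      have hxB : x ∉ B := fun h => (Finset.disjoint_left.1 hdisj) (hs hx) h
      rw [hwdef]; simp [hxB]
    have hsumBs : ∀ s : Finset Pt, s ⊆ B → ∑ p ∈ s, w p = (s.card : ℤ) := by
      intro s hs
      rw [Finset.card_eq_sum_ones]
      push_cast
      apply Finset.sum_congr rfl
      intro x hx
      rw [hwdef]; simp [hs hx]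
    have ha2eq : a2 = (Bp.card : ℤ) - ∑ p ∈ Rp, ((f p : ℤ) - 2) := by
      rw [ha2def, Sval, hApos, Finset.sum_union hdisjRpBp,
        hsumRp Rp (Finset.filter_subset _ _), hsumBs Bp (Finset.filter_subset _ _)]
      ring
    have hIsplit : I = (Rp ∪ Bp) ∪ (Rm ∪ Bm) := by
      apply Finset.ext
      intro p
      simp only [Finset.mem_union, hRpdef, hRmdef, hBpdef, hBmdef, Finset.mem_filter]
      constructor
      · intro hpI
        have hpP : p ∈ P := Finset.mem_of_mem_erase (hIdef ▸ hpI)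
        have hne := hGne p hpI
        rcases Finset.mem_union.1 hpP with h | h <;>
          rcases lt_or_gt_of_ne hne with h' | h'
        · exact Or.inr (Or.inl ⟨h, h'⟩)
        · exact Or.inl (Or.inl ⟨h, h'⟩)
        · exact Or.inr (Or.inr ⟨h, h'⟩)
        · exact Or.inl (Or.inr ⟨h, h'⟩)
      · rintro ((⟨h, hs⟩ | ⟨h, hs⟩) | (⟨h, hs⟩ | ⟨h, hs⟩))
        · exact hRmem p (Finset.mem_erase.2 ⟨fun he => by rw [he, hGr] at hs; exact lt_irrefl 0 hs, h⟩)
        · exact hBmem p h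
        · exact hRmem p (Finset.mem_erase.2 ⟨fun he => by rw [he, hGr] at hs; exact lt_irrefl 0 hs, h⟩)
        · exact hBmem p h
    have hdisjPM : Disjoint (Rp ∪ Bp) (Rm ∪ Bm) := by
      rw [Finset.disjoint_left]
      intro p hp hm
      have h1 : 0 < G p := by
        rcases Finset.mem_union.1 hp with h | h
        · exact (Finset.mem_filter.1 h).2
        · exact (Finset.mem_filter.1 h).2
      have h2 : G p < 0 := by
        rcases Finset.mem_union.1 hm with h | h
        · exact (Finset.mem_filter.1 h).2
        · exact (Finset.mem_filter.1 h).2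
      linarith
    have ha1eq : a1 = (Bm.card : ℤ) - ∑ p ∈ Rm, ((f p : ℤ) - 2) := by
      have := hwsum
      rw [hIsplit, Finset.sum_union hdisjPM, Finset.sum_union hdisjRpBp,
        Finset.sum_union hdisjRmBm, hsumRp Rp (Finset.filter_subset _ _),
        hsumRp Rm (Finset.filter_subset _ _), hsumBs Bp (Finset.filter_subset _ _),
        hsumBs Bm (Finset.filter_subset _ _)] at this
      rw [ha1def, ha2eq]
      omega
    have hsumRpnn : (0:ℤ) ≤ ∑ p ∈ Rp, ((f p : ℤ) - 2) :=
      Finset.sum_nonneg fun x hx => by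
        have := hf x (Finset.filter_subset _ _ hx); omega
    have hsumRmnn : (0:ℤ) ≤ ∑ p ∈ Rm, ((f p : ℤ) - 2) :=
      Finset.sum_nonneg fun x hx => by
        have := hf x (Finset.filter_subset _ _ hx); omega
    have hBpcard : (1:ℤ) ≤ Bp.card := by omega
    have hBmcard : (1:ℤ) ≤ Bm.card := by omega
    -- generic construction of the subproblem on one side
    have buildSide : ∀ (Rs Bs : Finset Pt) (a : ℤ), Rs ⊆ R → Bs ⊆ B →
        (∀ p, p ∈ Rs ∪ Bs → p ∈ I) → 1 ≤ a →
        a = (Bs.card : ℤ) - ∑ p ∈ Rs, ((f p : ℤ) - 2) →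
        ((Rs ∪ Bs ∪ {r}).card < P.card) →
        ∃ T : SimpleGraph Pt,
          (∀ x y : Pt, T.Adj x y → x ∈ Rs ∪ Bs ∪ {r} ∧ y ∈ Rs ∪ Bs ∪ {r}) ∧
          (∀ x ∈ Rs ∪ Bs ∪ {r}, T.Reachable x r) ∧
          T.IsAcyclic ∧
          (∀ a' b' c' d' : Pt, T.Adj a' b' → T.Adj c' d' → s(a', b') ≠ s(c', d') →
            openSegment ℝ a' b' ∩ openSegment ℝ c' d' = ∅) ∧
          (∀ x ∈ Bs, degr T x = 1) ∧ (∀ x ∈ Rs, degr T x = f x) ∧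
          degr T r = a.toNat := by
      intro Rs Bs a hRsub hBsub hsubI ha1 haeq hcards
      have hrRs : r ∉ Rs := by
        intro h
        have := hsubI r (Finset.mem_union_left _ h)
        exact (Finset.mem_erase.1 (hIdef ▸ this)).1 rfl
      have hrBs : r ∉ Bs := by
        intro h
        have := hsubI r (Finset.mem_union_right _ h)
        exact (Finset.mem_erase.1 (hIdef ▸ this)).1 rfl
      have hdisjs : Disjoint Rs Bs := (hdisj.mono_left hRsub).mono_right hBsub
      have hsubP : ∀ p, p ∈ Rs ∪ Bs ∪ {r} → p ∈ P := by
        intro p hp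
        rcases Finset.mem_union.1 hp with hp | hp
        · exact Finset.mem_of_mem_erase (hIdef ▸ hsubI p hp)
        · rw [Finset.mem_singleton.1 hp]; exact hrP
      have hsumnn : (0:ℤ) ≤ ∑ p ∈ Rs, ((f p : ℤ) - 2) :=
        Finset.sum_nonneg fun x hx => by have := hf x (hRsub hx); omega
      have hcastRs := hcast Rs hRsub
      by_cases ha : a = 1
      · -- r is a leaf on this side: make it blue
        have hd : Disjoint Rs (Bs ∪ {r}) := by
          rw [Finset.disjoint_union_right]
          exact ⟨hdisjs, Finset.disjoint_singleton_right.2 hrRs⟩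
        have hset : Rs ∪ (Bs ∪ {r}) = Rs ∪ Bs ∪ {r} := (Finset.union_assoc _ _ _).symm
        have hgps : GenPos ↑(Rs ∪ (Bs ∪ {r})) := by
          apply genpos_mono _ hgp
          rw [hset]
          intro x hx
          exact Finset.mem_coe.2 (hsubP x (Finset.mem_coe.1 hx))
        have hcardB : (Bs ∪ {r}).card = Bs.card + 1 := by
          rw [Finset.card_union_of_disjoint (Finset.disjoint_singleton_right.2 hrBs)]
          simp
        obtain ⟨T, hTsup, hTconn, hTac, hTnc, hTdegB, hTdegR⟩ := ih Rs (Bs ∪ {r}) f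
          (by rw [hset]; omega)
          hd hgps (fun x hx => hf x (hRsub hx))
          (by rw [hcardB]; omega)
          (by rw [hcardB]; omega)
        have hrmem : r ∈ Rs ∪ (Bs ∪ {r}) := by
          apply Finset.mem_union_right
          exact Finset.mem_union_right _ (Finset.mem_singleton_self r)
        refine ⟨T, ?_, ?_, hTac, hTnc, ?_, ?_, ?_⟩
        · intro x y hxy
          have := hTsup x y hxy
          rw [hset] at this
          exact this
        · intro x hx
          apply hTconn x (by rw [hset]; exact hx) r hrmem
        · intro x hx
          exact hTdegB x (Finset.mem_union_left _ hx)
        · exact hTdegR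
        · rw [ha]
          exact hTdegB r (Finset.mem_union_right _ (Finset.mem_singleton_self r))
      · -- r is red on this side with degree a
        have ha2 : 2 ≤ a := by omega
        set f' : Pt → ℕ := Function.update f r a.toNat with hf'def
        have hf'r : f' r = a.toNat := Function.update_self r _ f
        have hf'x : ∀ x, x ≠ r → f' x = f x := fun x hx => Function.update_of_ne hx _ f
        have hd : Disjoint (Rs ∪ {r}) Bs := by
          rw [Finset.disjoint_union_left]
          exact ⟨hdisjs, Finset.disjoint_singleton_left.2 hrBs⟩
        have hset : Rs ∪ {r} ∪ Bs = Rs ∪ Bs ∪ {r} := by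
          rw [Finset.union_right_comm]
        have hgps : GenPos ↑(Rs ∪ {r} ∪ Bs) := by
          apply genpos_mono _ hgp
          rw [hset]
          intro x hx
          exact Finset.mem_coe.2 (hsubP x (Finset.mem_coe.1 hx))
        have hins : Rs ∪ {r} = insert r Rs := by
          rw [Finset.union_comm]
          rfl
        have hsumf' : ∑ x ∈ Rs ∪ {r}, (f' x - 2) = (a.toNat - 2) + ∑ x ∈ Rs, (f x - 2) := by
          rw [hins, Finset.sum_insert hrRs, hf'r]
          congr 1
          apply Finset.sum_congr rfl
          intro x hx
          rw [hf'x x (fun h => hrRs (h ▸ hx))]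
        have hanat : ((a.toNat : ℤ)) = a := Int.toNat_of_nonneg (by omega)
        obtain ⟨T, hTsup, hTconn, hTac, hTnc, hTdegB, hTdegR⟩ := ih (Rs ∪ {r}) Bs f'
          (by rw [hset]; omega)
          hd hgps
          (by
            intro x hx
            rcases Finset.mem_union.1 hx with h | h
            · rw [hf'x x (fun he => hrRs (he ▸ h))]
              exact hf x (hRsub h)
            · rw [Finset.mem_singleton.1 h, hf'r]
              omega)
          (by rw [hsumf']; omega)
          (by omega)
        have hrmem : r ∈ Rs ∪ {r} ∪ Bs := by
          apply Finset.mem_union_left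
          exact Finset.mem_union_right _ (Finset.mem_singleton_self r)
        refine ⟨T, ?_, ?_, hTac, hTnc, ?_, ?_, ?_⟩
        · intro x y hxy
          have := hTsup x y hxy
          rw [hset] at this
          exact this
        · intro x hx
          apply hTconn x (by rw [hset]; exact hx) r hrmem
        · exact hTdegB
        · intro x hx
          rw [← hf'x x (fun h => hrRs (h ▸ hx))]
          exact hTdegR x (Finset.mem_union_left _ hx)
        · rw [← hf'r]
          exact hTdegR r (Finset.mem_union_right _ (Finset.mem_singleton_self r))
    -- the two sides
    have hIp : ∀ p, p ∈ Rp ∪ Bp → p ∈ I := by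
      intro p hp
      rcases Finset.mem_union.1 hp with h | h
      · obtain ⟨hpR, hps⟩ := Finset.mem_filter.1 h
        exact hRmem p (Finset.mem_erase.2
          ⟨fun he => by rw [he, hGr] at hps; exact lt_irrefl 0 hps, hpR⟩)
      · exact hBmem p (Finset.filter_subset _ _ h)
    have hIm : ∀ p, p ∈ Rm ∪ Bm → p ∈ I := by
      intro p hp
      rcases Finset.mem_union.1 hp with h | h
      · obtain ⟨hpR, hps⟩ := Finset.mem_filter.1 h
        exact hRmem p (Finset.mem_erase.2
          ⟨fun he => by rw [he, hGr] at hps; exact lt_irrefl 0 hps, hpR⟩)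
      · exact hBmem p (Finset.filter_subset _ _ h)
    have hsubP2 : ∀ p, p ∈ Rp ∪ Bp ∪ {r} → p ∈ P := by
      intro p hp
      rcases Finset.mem_union.1 hp with h | h
      · exact Finset.mem_of_mem_erase (hIdef ▸ hIp p h)
      · rw [Finset.mem_singleton.1 h]; exact hrP
    have hsubP1 : ∀ p, p ∈ Rm ∪ Bm ∪ {r} → p ∈ P := by
      intro p hp
      rcases Finset.mem_union.1 hp with h | h
      · exact Finset.mem_of_mem_erase (hIdef ▸ hIm p h)
      · rw [Finset.mem_singleton.1 h]; exact hrP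
    have hQ2pos : ∀ p, p ∈ Rp ∪ Bp ∪ {r} → p ≠ r → 0 < G p := by
      intro p hp hpr
      rcases Finset.mem_union.1 hp with h | h
      · rcases Finset.mem_union.1 h with h' | h'
        · exact (Finset.mem_filter.1 h').2
        · exact (Finset.mem_filter.1 h').2
      · exact absurd (Finset.mem_singleton.1 h) hpr
    have hQ1neg : ∀ p, p ∈ Rm ∪ Bm ∪ {r} → p ≠ r → G p < 0 := by
      intro p hp hpr
      rcases Finset.mem_union.1 hp with h | h
      · rcases Finset.mem_union.1 h with h' | h'
        · exact (Finset.mem_filter.1 h').2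
        · exact (Finset.mem_filter.1 h').2
      · exact absurd (Finset.mem_singleton.1 h) hpr
    have hcards2 : (Rp ∪ Bp ∪ {r}).card < P.card := by
      have hsub : Rp ∪ Bp ∪ {r} ⊆ P := fun p hp => hsubP2 p hp
      obtain ⟨b, hb⟩ := Finset.card_pos.1 (show 0 < Bm.card by omega)
      apply Finset.card_lt_card
      rw [Finset.ssubset_iff_of_subset hsub]
      refine ⟨b, Finset.mem_union_right _ (Finset.filter_subset _ _ hb), ?_⟩
      intro hmem
      have hbneg : G b < 0 := (Finset.mem_filter.1 hb).2
      have hbr : b ≠ r := fun h => hrB (h ▸ (Finset.filter_subset _ _ hb))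
      have := hQ2pos b hmem hbr
      linarith
    have hcards1 : (Rm ∪ Bm ∪ {r}).card < P.card := by
      have hsub : Rm ∪ Bm ∪ {r} ⊆ P := fun p hp => hsubP1 p hp
      obtain ⟨b, hb⟩ := Finset.card_pos.1 (show 0 < Bp.card by omega)
      apply Finset.card_lt_card
      rw [Finset.ssubset_iff_of_subset hsub]
      refine ⟨b, Finset.mem_union_right _ (Finset.filter_subset _ _ hb), ?_⟩
      intro hmem
      have hbpos : 0 < G b := (Finset.mem_filter.1 hb).2
      have hbr : b ≠ r := fun h => hrB (h ▸ (Finset.filter_subset _ _ hb))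
      have := hQ1neg b hmem hbr
      linarith
    obtain ⟨T₂, hT2sup, hT2conn, hT2ac, hT2nc, hT2degB, hT2degR, hT2degr⟩ :=
      buildSide Rp Bp a2 (Finset.filter_subset _ _) (Finset.filter_subset _ _) hIp
        (by omega) ha2eq hcards2
    obtain ⟨T₁, hT1sup, hT1conn, hT1ac, hT1nc, hT1degB, hT1degR, hT1degr⟩ :=
      buildSide Rm Bm a1 (Finset.filter_subset _ _) (Finset.filter_subset _ _) hIm
        (by omega) ha1eq hcards1
    have hQ1adj : ∀ x y : Pt, T₁.Adj x y →
        x ∈ (↑(Rm ∪ Bm ∪ {r}) : Set Pt) ∧ y ∈ (↑(Rm ∪ Bm ∪ {r}) : Set Pt) := by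
      intro x y h
      obtain ⟨h1, h2⟩ := hT1sup x y h
      exact ⟨Finset.mem_coe.2 h1, Finset.mem_coe.2 h2⟩
    have hQ2adj : ∀ x y : Pt, T₂.Adj x y →
        x ∈ (↑(Rp ∪ Bp ∪ {r}) : Set Pt) ∧ y ∈ (↑(Rp ∪ Bp ∪ {r}) : Set Pt) := by
      intro x y h
      obtain ⟨h1, h2⟩ := hT2sup x y h
      exact ⟨Finset.mem_coe.2 h1, Finset.mem_coe.2 h2⟩
    have hQkey : ∀ x : Pt, x ∈ (↑(Rm ∪ Bm ∪ {r}) : Set Pt) →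
        x ∈ (↑(Rp ∪ Bp ∪ {r}) : Set Pt) → x = r := by
      intro x h1 h2
      by_contra hxr
      have := hQ1neg x (Finset.mem_coe.1 h1) hxr
      have := hQ2pos x (Finset.mem_coe.1 h2) hxr
      linarith
    have hGconv : ∀ q : Pt, (q 0 - r 0) * (τ - sl) + (q 1 - r 1) * (1 + τ * sl) = G q :=
      fun q => by rw [hGdef]
    have hsep : ∀ x1 y1 x2 y2 : Pt, T₁.Adj x1 y1 → T₂.Adj x2 y2 →
        openSegment ℝ x1 y1 ∩ openSegment ℝ x2 y2 = ∅ := by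
      intro x1 y1 x2 y2 h1 h2
      apply Set.eq_empty_iff_forall_notMem.2
      rintro z ⟨hz1, hz2⟩
      obtain ⟨hx1, hy1⟩ := hT1sup x1 y1 h1
      obtain ⟨hx2, hy2⟩ := hT2sup x2 y2 h2
      have hGx1 : G x1 ≤ 0 := by
        by_cases h : x1 = r
        · rw [h, hGr]
        · exact le_of_lt (hQ1neg x1 hx1 h)
      have hGy1 : G y1 ≤ 0 := by
        by_cases h : y1 = r
        · rw [h, hGr]
        · exact le_of_lt (hQ1neg y1 hy1 h)
      have hGx2 : 0 ≤ G x2 := by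
        by_cases h : x2 = r
        · rw [h, hGr]
        · exact le_of_lt (hQ2pos x2 hx2 h)
      have hGy2 : 0 ≤ G y2 := by
        by_cases h : y2 = r
        · rw [h, hGr]
        · exact le_of_lt (hQ2pos y2 hy2 h)
      have hne1 : G x1 ≠ 0 ∨ G y1 ≠ 0 := by
        by_cases h : x1 = r
        · right
          have hy1r : y1 ≠ r := fun hy => h1.ne (by rw [h, hy])
          exact ne_of_lt (hQ1neg y1 hy1 hy1r)
        · exact Or.inl (ne_of_lt (hQ1neg x1 hx1 h))
      have hne2 : G x2 ≠ 0 ∨ G y2 ≠ 0 := by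
        by_cases h : x2 = r
        · right
          have hy2r : y2 ≠ r := fun hy => h2.ne (by rw [h, hy])
          exact ne_of_gt (hQ2pos y2 hy2 hy2r)
        · exact Or.inl (ne_of_gt (hQ2pos x2 hx2 h))
      have hneg : (z 0 - r 0) * (τ - sl) + (z 1 - r 1) * (1 + τ * sl) < 0 := by
        apply seg_neg r (τ - sl) (1 + τ * sl) _ _ _ hz1
        · rw [hGconv]; exact hGx1
        · rw [hGconv]; exact hGy1
        · rcases hne1 with h | h
          · left; rw [hGconv]; exact h
          · right; rw [hGconv]; exact h
      have hpos : 0 < (z 0 - r 0) * (τ - sl) + (z 1 - r 1) * (1 + τ * sl) := by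
        apply seg_pos r (τ - sl) (1 + τ * sl) _ _ _ hz2
        · rw [hGconv]; exact hGx2
        · rw [hGconv]; exact hGy2
        · rcases hne2 with h | h
          · left; rw [hGconv]; exact h
          · right; rw [hGconv]; exact h
      linarith
    have htri : ∀ x, x ∈ P → x = r ∨ (x ∈ Rm ∪ Bm ∪ {r} ∧ G x < 0) ∨
        (x ∈ Rp ∪ Bp ∪ {r} ∧ 0 < G x) := by
      intro x hx
      by_cases hxr : x = r
      · exact Or.inl hxr
      have hxI : x ∈ I := by
        rw [hIdef]
        exact Finset.mem_erase.2 ⟨hxr, hx⟩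
      rcases lt_or_gt_of_ne (hGne x hxI) with h | h
      · refine Or.inr (Or.inl ⟨?_, h⟩)
        apply Finset.mem_union_left
        rcases Finset.mem_union.1 hx with h' | h'
        · exact Finset.mem_union_left _ (Finset.mem_filter.2 ⟨h', h⟩)
        · exact Finset.mem_union_right _ (Finset.mem_filter.2 ⟨h', h⟩)
      · refine Or.inr (Or.inr ⟨?_, h⟩)
        apply Finset.mem_union_left
        rcases Finset.mem_union.1 hx with h' | h'
        · exact Finset.mem_union_left _ (Finset.mem_filter.2 ⟨h', h⟩)
        · exact Finset.mem_union_right _ (Finset.mem_filter.2 ⟨h', h⟩)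
    have hreach : ∀ x ∈ P, (T₁ ⊔ T₂).Reachable x r := by
      intro x hx
      rcases htri x hx with rfl | ⟨hm, -⟩ | ⟨hm, -⟩
      · exact SimpleGraph.Reachable.refl x
      · exact (hT1conn x hm).mono le_sup_left
      · exact (hT2conn x hm).mono le_sup_right
    refine ⟨T₁ ⊔ T₂, ?_, ?_, sup_acyclic hT1ac hT2ac hQ1adj hQ2adj hQkey, ?_, ?_, ?_⟩
    · intro x y hxy
      rcases (SimpleGraph.sup_adj _ _ _ _).1 hxy with h | h
      · obtain ⟨h1, h2⟩ := hT1sup x y h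
        exact ⟨hsubP1 x h1, hsubP1 y h2⟩
      · obtain ⟨h1, h2⟩ := hT2sup x y h
        exact ⟨hsubP2 x h1, hsubP2 y h2⟩
    · intro x hx y hy
      exact (hreach x hx).trans (hreach y hy).symm
    · intro x1 y1 x2 y2 h1 h2 hne
      rcases (SimpleGraph.sup_adj _ _ _ _).1 h1 with ha | ha <;>
        rcases (SimpleGraph.sup_adj _ _ _ _).1 h2 with hb | hb
      · exact hT1nc x1 y1 x2 y2 ha hb hne
      · exact hsep x1 y1 x2 y2 ha hb
      · rw [Set.inter_comm]
        exact hsep x2 y2 x1 y1 hb ha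
      · exact hT2nc x1 y1 x2 y2 ha hb hne
    · intro x hx
      have hxr : x ≠ r := fun h => hrB (h ▸ hx)
      rcases htri x (Finset.mem_union_right _ hx) with h | ⟨hm, hneg⟩ | ⟨hm, hpos⟩
      · exact absurd h hxr
      · have hnot2 : x ∉ (↑(Rp ∪ Bp ∪ {r}) : Set Pt) := by
          intro hc
          have := hQ2pos x (Finset.mem_coe.1 hc) hxr
          linarith
        rw [degr_sup_left hQ2adj hnot2]
        exact hT1degB x (Finset.mem_filter.2 ⟨hx, hneg⟩)
      · have hnot1 : x ∉ (↑(Rm ∪ Bm ∪ {r}) : Set Pt) := by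
          intro hc
          have := hQ1neg x (Finset.mem_coe.1 hc) hxr
          linarith
        rw [sup_comm, degr_sup_left hQ1adj hnot1]
        exact hT2degB x (Finset.mem_filter.2 ⟨hx, hpos⟩)
    · intro x hx
      by_cases hxr : x = r
      · subst hxr
        rw [degr_sup_add hQ1adj hQ2adj hQkey (Finset.finite_toSet _) (Finset.finite_toSet _)]
        rw [hT1degr, hT2degr]
        omega
      · rcases htri x (Finset.mem_union_left _ hx) with h | ⟨hm, hneg⟩ | ⟨hm, hpos⟩
        · exact absurd h hxr
        · have hnot2 : x ∉ (↑(Rp ∪ Bp ∪ {r}) : Set Pt) := by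
            intro hc
            have := hQ2pos x (Finset.mem_coe.1 hc) hxr
            linarith
          rw [degr_sup_left hQ2adj hnot2]
          exact hT1degR x (Finset.mem_filter.2 ⟨hx, hneg⟩)
        · have hnot1 : x ∉ (↑(Rm ∪ Bm ∪ {r}) : Set Pt) := by
            intro hc
            have := hQ1neg x (Finset.mem_coe.1 hc) hxr
            linarith
          rw [sup_comm, degr_sup_left hQ1adj hnot1]
          exact hT2degR x (Finset.mem_filter.2 ⟨hx, hpos⟩)

end NCT

theorem noncrossing_tree_exact_degrees (R B : Finset Pt) (hdisj : Disjoint R B)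
    (hgp : GenPos ↑(R ∪ B)) (f : Pt → ℕ) (hf : ∀ x ∈ R, 2 ≤ f x)
    (hB : B.card = ∑ x ∈ R, (f x - 2) + 2) (hB2 : 2 ≤ B.card) :
    ∃ T : SimpleGraph ↥(R ∪ B), T.IsTree ∧ NonCrossing (R ∪ B) T ∧
      (∀ v : ↥(R ∪ B), degr T v = 1 ↔ v.1 ∈ B) ∧
      (∀ v : ↥(R ∪ B), v.1 ∈ R → degr T v = f v.1) := by
  obtain ⟨T, hsup, hconn, hac, hnc, hdegB, hdegR⟩ :=
    NCT.main_ind (R ∪ B).card R B f le_rfl hdisj hgp hf hB hB2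
  set T' : SimpleGraph ↥(R ∪ B) :=
    { Adj := fun a b => T.Adj a.1 b.1
      symm := ⟨fun a b h => T.symm.symm _ _ h⟩
      loopless := ⟨fun a h => T.loopless.irrefl a.1 h⟩ } with hT'
  have hlift : ∀ (x y : Pt) (p : T.Walk x y) (hx : x ∈ R ∪ B) (hy : y ∈ R ∪ B),
      T'.Reachable ⟨x, hx⟩ ⟨y, hy⟩ := by
    intro x y p
    induction p with
    | nil =>
      intro hx hy
      have h : (⟨_, hx⟩ : ↥(R ∪ B)) = ⟨_, hy⟩ := Subtype.ext rfl
      rw [h]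
    | @cons u v w h q ih =>
      intro hx hy
      have hv : v ∈ R ∪ B := (hsup u v h).2
      exact (SimpleGraph.Adj.reachable
        (show T'.Adj ⟨u, hx⟩ ⟨v, hv⟩ from h)).trans (ih hv hy)
  have hdeg : ∀ v : ↥(R ∪ B), degr T' v = degr T v.1 := by
    intro v
    unfold degr
    apply Nat.card_congr
    refine ⟨fun w => ⟨w.1.1, w.2⟩, fun w => ⟨⟨w.1, (hsup v.1 w.1 w.2).2⟩, w.2⟩, ?_, ?_⟩
    · rintro ⟨⟨a, ha⟩, h⟩; rfl
    · rintro ⟨a, h⟩; rfl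
  have hone : ∃ b, b ∈ B := by
    obtain ⟨b, hb⟩ := Finset.card_pos.1 (show 0 < B.card by omega)
    exact ⟨b, hb⟩
  obtain ⟨b₀, hb₀⟩ := hone
  have hconn' : T'.Connected := by
    rw [SimpleGraph.connected_iff]
    refine ⟨?_, ⟨⟨b₀, Finset.mem_union_right _ hb₀⟩⟩⟩
    intro u v
    obtain ⟨p⟩ := hconn u.1 u.2 v.1 v.2
    exact hlift u.1 v.1 p u.2 v.2
  have hac' : T'.IsAcyclic := by
    intro v c hc
    let hom : T' →g T := ⟨Subtype.val, fun {a b} h => h⟩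
    have hinj : Function.Injective (⇑hom) := by
      intro a b hab
      exact Subtype.ext hab
    exact hac (c.map hom) ((SimpleGraph.Walk.map_isCycle_iff_of_injective hinj).2 hc)
  refine ⟨T', ⟨hconn', hac'⟩, ?_, ?_, ?_⟩
  · intro a b c d hab hcd hne
    apply hnc a.1 b.1 c.1 d.1 hab hcd
    intro hcontra
    apply hne
    rw [Sym2.eq_iff] at hcontra ⊢
    rcases hcontra with ⟨h1, h2⟩ | ⟨h1, h2⟩
    · exact Or.inl ⟨Subtype.ext h1, Subtype.ext h2⟩
    · exact Or.inr ⟨Subtype.ext h1, Subtype.ext h2⟩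
  · intro v
    rw [hdeg v]
    constructor
    · intro h1
      rcases Finset.mem_union.1 v.2 with h | h
      · exfalso
        have hd := hdegR v.1 h
        have hfv := hf v.1 h
        omega
      · exact h
    · exact hdegB v.1
  · intro v hv
    rw [hdeg v]
    exact hdegR v.1 hv
end

section
/- Among all straight-line spanning trees on a finite point set P ⊂ ℝ² in general position realizing a fixed degree function d : P → ℕ (assuming at least one such tree exists and d(p) = 1 exactly for p in a designated subset B), there exists one of minimum total Euclidean edge length, and any such minimum-length tree is non-crossing. -/
open scoped BigOperators

/-! ### Auxiliary graph-theoretic lemmas -/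

open SimpleGraph

section Graphs
variable {V : Type*}

lemma reach_of_walk {G G' : SimpleGraph V} (h : ∀ x y, G.Adj x y → G'.Reachable x y)
    {u v : V} (w : G.Walk u v) : G'.Reachable u v := by
  induction w with
  | nil => exact Reachable.refl _
  | cons ha _ ih => exact (h _ _ ha).trans ih

/-- Deleting one edge, reachability splits into three cases. -/
lemma reach_delete_cases {G : SimpleGraph V} {x y u v : V}
    (w : G.Walk u v) :
    (G.deleteEdges {s(x,y)}).Reachable u v ∨
    ((G.deleteEdges {s(x,y)}).Reachable u x ∧ (G.deleteEdges {s(x,y)}).Reachable y v) ∨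
    ((G.deleteEdges {s(x,y)}).Reachable u y ∧ (G.deleteEdges {s(x,y)}).Reachable x v) := by
  induction w with
  | nil => exact Or.inl (Reachable.refl _)
  | @cons u w' v ha _ ih =>
    by_cases he : s(u, w') = s(x, y)
    · rw [Sym2.eq_iff] at he
      rcases he with ⟨rfl, rfl⟩ | ⟨rfl, rfl⟩
      · rcases ih with h1 | ⟨h1, h2⟩ | ⟨h1, h2⟩
        · exact Or.inr (Or.inl ⟨Reachable.refl _, h1⟩)
        · exact Or.inr (Or.inl ⟨Reachable.refl _, h2⟩)
        · exact Or.inl h2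
      · rcases ih with h1 | ⟨h1, h2⟩ | ⟨h1, h2⟩
        · exact Or.inr (Or.inr ⟨Reachable.refl _, h1⟩)
        · exact Or.inl h2
        · exact Or.inr (Or.inr ⟨Reachable.refl _, h2⟩)
    · have hadj : (G.deleteEdges {s(x,y)}).Adj u w' := by
        rw [deleteEdges_adj]
        exact ⟨ha, by simpa using he⟩
      rcases ih with h1 | ⟨h1, h2⟩ | ⟨h1, h2⟩
      · exact Or.inl (hadj.reachable.trans h1)
      · exact Or.inr (Or.inl ⟨hadj.reachable.trans h1, h2⟩)
      · exact Or.inr (Or.inr ⟨hadj.reachable.trans h1, h2⟩)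

lemma connected_deleteEdges_of_reachable {G : SimpleGraph V} {x y : V}
    (hc : G.Connected)
    (h : (G.deleteEdges {s(x,y)}).Reachable x y) :
    (G.deleteEdges {s(x,y)}).Connected := by
  have hne : Nonempty V := hc.nonempty
  have hpre : (G.deleteEdges {s(x,y)}).Preconnected := by
    intro u v
    obtain ⟨w⟩ := hc.preconnected u v
    refine reach_of_walk (fun p q hpq => ?_) w
    by_cases he : s(p, q) = s(x, y)
    · rw [Sym2.eq_iff] at he
      rcases he with ⟨rfl, rfl⟩ | ⟨rfl, rfl⟩
      · exact h
      · exact h.symm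
    · exact Adj.reachable (by rw [deleteEdges_adj]; exact ⟨hpq, by simpa using he⟩)
  exact ⟨hpre⟩

lemma edgeSet_deleteEdges' (G : SimpleGraph V) (s : Set (Sym2 V)) :
    (G.deleteEdges s).edgeSet = G.edgeSet \ s := by
  ext e
  induction e with
  | _ p q => simp [mem_edgeSet]

lemma reach_four (G : SimpleGraph V) (hc : G.Connected) (a b c d : V) :
    (G.deleteEdges {s(a,b), s(c,d)}).Reachable a c ∨
    (G.deleteEdges {s(a,b), s(c,d)}).Reachable a d ∨
    (G.deleteEdges {s(a,b), s(c,d)}).Reachable b c ∨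
    (G.deleteEdges {s(a,b), s(c,d)}).Reachable b d := by
  set G1 := G.deleteEdges {s(c,d)} with hG1
  have hH : G1.deleteEdges {s(a,b)} = G.deleteEdges {s(a,b), s(c,d)} := by
    rw [hG1, deleteEdges_deleteEdges]
    congr 1
    rw [Set.singleton_union, Set.pair_comm]
  obtain ⟨w⟩ := hc.preconnected a c
  have step1 : G1.Reachable a c ∨ G1.Reachable a d := by
    rcases reach_delete_cases (x := c) (y := d) w with h | ⟨h1, h2⟩ | ⟨h1, h2⟩
    · exact Or.inl h
    · exact Or.inl h1
    · exact Or.inr h1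
  have step2 : ∀ t : V, G1.Reachable a t →
      (G1.deleteEdges {s(a,b)}).Reachable a t ∨ (G1.deleteEdges {s(a,b)}).Reachable b t := by
    intro t ht
    obtain ⟨w2⟩ := ht
    rcases reach_delete_cases (x := a) (y := b) w2 with h | ⟨h1, h2⟩ | ⟨h1, h2⟩
    · exact Or.inl h
    · exact Or.inr h2
    · exact Or.inl h2
  rcases step1 with h | h
  · rcases step2 c h with h2 | h2
    · exact Or.inl (hH ▸ h2)
    · exact Or.inr (Or.inr (Or.inl (hH ▸ h2)))
  · rcases step2 d h with h2 | h2
    · exact Or.inr (Or.inl (hH ▸ h2))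
    · exact Or.inr (Or.inr (Or.inr (hH ▸ h2)))

end Graphs

section Count
variable {V : Type*} [Fintype V]

lemma exists_spanning_tree (G : SimpleGraph V) (hc : G.Connected) :
    ∃ T : SimpleGraph V, T ≤ G ∧ T.IsTree := by
  classical
  generalize hn : G.edgeSet.ncard = n
  induction n using Nat.strong_induction_on generalizing G with
  | _ n ih =>
    by_cases hac : G.IsAcyclic
    · exact ⟨G, le_refl G, hc, hac⟩
    · rw [isAcyclic_iff_forall_adj_isBridge] at hac
      push_neg at hac
      obtain ⟨x, y, hxy, hbr⟩ := hac
      rw [isBridge_iff] at hbr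
      push_neg at hbr
      have hreach : (G.deleteEdges {s(x,y)}).Reachable x y := hbr
      have hc' := connected_deleteEdges_of_reachable hc hreach
      have hsub : (G.deleteEdges {s(x,y)}).edgeSet ⊂ G.edgeSet := by
        rw [edgeSet_deleteEdges']
        rw [Set.ssubset_iff_of_subset Set.diff_subset]
        exact ⟨s(x,y), by simpa [mem_edgeSet] using hxy, by simp⟩
      have hlt : (G.deleteEdges {s(x,y)}).edgeSet.ncard < n := by
        rw [← hn]
        exact Set.ncard_lt_ncard hsub (Set.toFinite _)
      obtain ⟨T, hT1, hT2⟩ := ih _ hlt _ hc' rfl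
      exact ⟨T, hT1.trans (deleteEdges_le _), hT2⟩

lemma isTree_of_connected_of_card (G : SimpleGraph V) (hc : G.Connected)
    (hcard : G.edgeSet.ncard + 1 = Fintype.card V) : G.IsTree := by
  classical
  obtain ⟨T, hle, hT⟩ := exists_spanning_tree G hc
  have hTc := hT.card_edgeFinset
  have hsub : T.edgeSet ⊆ G.edgeSet := edgeSet_mono hle
  have hTcard : T.edgeSet.ncard + 1 = Fintype.card V := by
    rwa [← Set.ncard_coe_finset, coe_edgeFinset] at hTc
  have hTG : T.edgeSet = G.edgeSet :=
    Set.eq_of_subset_of_ncard_le hsub (by omega) (Set.toFinite _)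
  have hTG' : T = G := edgeSet_inj.mp hTG
  exact hTG' ▸ hT

lemma degr_eq_ncard (G : SimpleGraph V) (v : V) : degr G v = {w | G.Adj v w}.ncard :=
  Nat.card_coe_set_eq _

lemma degr_swap_aux {G G' : SimpleGraph V} {v x y : V}
    (h : ∀ w, G'.Adj v w ↔ (w = y ∨ (G.Adj v w ∧ w ≠ x)))
    (hx : G.Adj v x) (hy : ¬ G.Adj v y) :
    degr G' v = degr G v := by
  have hset : {w | G'.Adj v w} = insert y ({w | G.Adj v w} \ {x}) := by
    ext w
    simp only [Set.mem_setOf_eq, h w, Set.mem_insert_iff, Set.mem_diff,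
      Set.mem_singleton_iff]
  rw [degr_eq_ncard, degr_eq_ncard, hset,
    Set.ncard_insert_of_notMem (by simp [hy]) (Set.toFinite _),
    Set.ncard_diff_singleton_add_one (by simpa using hx) (Set.toFinite _)]

lemma degr_congr {G G' : SimpleGraph V} {v : V}
    (h : ∀ w, G'.Adj v w ↔ G.Adj v w) : degr G' v = degr G v := by
  rw [degr_eq_ncard, degr_eq_ncard]
  congr 1
  ext w
  exact h w

end Count
section Swap
variable {V : Type*} [Fintype V]

lemma swap_tree_s15 {G : SimpleGraph V} (hG : G.IsTree)
    {a b c d : V} (hab : G.Adj a b) (hcd : G.Adj c d)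
    (hac : a ≠ c) (had : a ≠ d) (hbc : b ≠ c) (hbd : b ≠ d)
    (hreach : (G.deleteEdges {s(a,b), s(c,d)}).Reachable b c) :
    ∃ G' : SimpleGraph V, G'.IsTree ∧ (∀ p, degr G' p = degr G p) ∧
      G'.edgeSet = (G.edgeSet \ {s(a,b), s(c,d)}) ∪ {s(a,c), s(b,d)} ∧
      ¬ G.Adj a c ∧ ¬ G.Adj b d := by
  classical
  have hab' : a ≠ b := hab.ne
  have hcd' : c ≠ d := hcd.ne
  set H := G.deleteEdges {s(a,b), s(c,d)} with hHdef
  have hene : s(a,b) ≠ s(c,d) := by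
    rw [ne_eq, Sym2.eq_iff]
    rintro (⟨h1, h2⟩ | ⟨h1, h2⟩)
    · exact hac h1
    · exact had h1
  have hene2 : s(a,c) ≠ s(b,d) := by
    rw [ne_eq, Sym2.eq_iff]
    rintro (⟨h1, h2⟩ | ⟨h1, h2⟩)
    · exact hab' h1
    · exact had h1
  have hHle1 : H ≤ G.deleteEdges {s(a,b)} := by
    intro u v huv
    rw [hHdef, deleteEdges_adj] at huv
    rw [deleteEdges_adj]
    refine ⟨huv.1, fun h => huv.2 ?_⟩
    rw [Set.mem_singleton_iff] at h
    simp [h]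
  have hHle2 : H ≤ G.deleteEdges {s(c,d)} := by
    intro u v huv
    rw [hHdef, deleteEdges_adj] at huv
    rw [deleteEdges_adj]
    refine ⟨huv.1, fun h => huv.2 ?_⟩
    rw [Set.mem_singleton_iff] at h
    simp [h]
  have hbridge : ∀ {x y : V}, G.Adj x y → ¬ (G.deleteEdges {s(x,y)}).Reachable x y := by
    intro x y hxy
    have := (isAcyclic_iff_forall_adj_isBridge.mp hG.IsAcyclic) hxy
    rw [isBridge_iff] at this
    exact this
  have hnab : ¬ H.Reachable a b := fun h => hbridge hab (h.mono hHle1)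
  have hncd : ¬ H.Reachable c d := fun h => hbridge hcd (h.mono hHle2)
  have hGnac : ¬ G.Adj a c := by
    intro h
    apply hnab
    have hH : H.Adj a c := by
      rw [hHdef, deleteEdges_adj]
      refine ⟨h, ?_⟩
      intro hm
      rcases hm with hm | hm
      · rw [Sym2.eq_iff] at hm
        rcases hm with ⟨-, h2⟩ | ⟨h1, -⟩
        · exact hbc h2.symm
        · exact hab' h1
      · rw [Set.mem_singleton_iff, Sym2.eq_iff] at hm
        rcases hm with ⟨h1, -⟩ | ⟨h1, -⟩
        · exact hac h1
        · exact had h1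
    exact hH.reachable.trans hreach.symm
  have hGnbd : ¬ G.Adj b d := by
    intro h
    apply hncd
    have hH : H.Adj b d := by
      rw [hHdef, deleteEdges_adj]
      refine ⟨h, ?_⟩
      intro hm
      rcases hm with hm | hm
      · rw [Sym2.eq_iff] at hm
        rcases hm with ⟨h1, -⟩ | ⟨-, h2⟩
        · exact hab' h1.symm
        · exact had h2.symm
      · rw [Set.mem_singleton_iff, Sym2.eq_iff] at hm
        rcases hm with ⟨h1, -⟩ | ⟨h1, -⟩
        · exact hbc h1
        · exact hbd h1
    exact hreach.symm.trans hH.reachable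
  set S : Set (Sym2 V) := (G.edgeSet \ {s(a,b), s(c,d)}) ∪ {s(a,c), s(b,d)} with hSdef
  set G' : SimpleGraph V := fromEdgeSet S with hG'def
  have hES : G'.edgeSet = S := by
    rw [hG'def, edgeSet_fromEdgeSet]
    ext e
    constructor
    · rintro ⟨he, -⟩; exact he
    · intro he
      refine ⟨he, ?_⟩
      rcases he with ⟨he, -⟩ | he
      · exact G.not_isDiag_of_mem_edgeSet he
      · rcases he with he | he
        · subst he; simpa using hac
        · rw [Set.mem_singleton_iff] at he; subst he; simpa using hbd
  have hHleG' : H ≤ G' := by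
    intro u v huv
    rw [hHdef, deleteEdges_adj] at huv
    rw [hG'def, fromEdgeSet_adj]
    exact ⟨Or.inl ⟨huv.1, huv.2⟩, huv.1.ne⟩
  have hG'ac : G'.Adj a c := by
    rw [hG'def, fromEdgeSet_adj]
    exact ⟨Or.inr (by simp), hac⟩
  have hG'bd : G'.Adj b d := by
    rw [hG'def, fromEdgeSet_adj]
    exact ⟨Or.inr (by simp), hbd⟩
  have hreachG' : G'.Reachable b c := hreach.mono hHleG'
  have hconn : G'.Connected := by
    have hne : Nonempty V := hG.isConnected.nonempty
    refine ⟨fun u v => ?_⟩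
    obtain ⟨w⟩ := hG.isConnected.preconnected u v
    refine reach_of_walk (fun p q hpq => ?_) w
    by_cases h1 : s(p, q) = s(a, b)
    · rw [Sym2.eq_iff] at h1
      have hab'' : G'.Reachable a b := hG'ac.reachable.trans hreachG'.symm
      rcases h1 with ⟨rfl, rfl⟩ | ⟨rfl, rfl⟩
      · exact hab''
      · exact hab''.symm
    · by_cases h2 : s(p, q) = s(c, d)
      · rw [Sym2.eq_iff] at h2
        have hcd'' : G'.Reachable c d := hreachG'.symm.trans hG'bd.reachable
        rcases h2 with ⟨rfl, rfl⟩ | ⟨rfl, rfl⟩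
        · exact hcd''
        · exact hcd''.symm
      · refine Adj.reachable ?_
        apply hHleG'
        rw [hHdef, deleteEdges_adj]
        exact ⟨hpq, by simp [h1, h2]⟩
  have hsubE : ({s(a,b), s(c,d)} : Set (Sym2 V)) ⊆ G.edgeSet := by
    rintro e (rfl | he)
    · exact G.mem_edgeSet.mpr hab
    · rw [Set.mem_singleton_iff] at he; subst he; exact G.mem_edgeSet.mpr hcd
  have hcardG : G.edgeSet.ncard + 1 = Fintype.card V := by
    have := hG.card_edgeFinset
    rwa [← Set.ncard_coe_finset, coe_edgeFinset] at this
  have hcardS : S.ncard + 1 = Fintype.card V := by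
    have hdisj : Disjoint (G.edgeSet \ {s(a,b), s(c,d)}) ({s(a,c), s(b,d)} : Set (Sym2 V)) := by
      rw [Set.disjoint_right]
      rintro e (rfl | he)
      · rintro ⟨he2, -⟩; exact hGnac (G.mem_edgeSet.mp he2)
      · rw [Set.mem_singleton_iff] at he; subst he
        rintro ⟨he2, -⟩; exact hGnbd (G.mem_edgeSet.mp he2)
    have h2a : ({s(a,b), s(c,d)} : Set (Sym2 V)).ncard = 2 := Set.ncard_pair hene
    have h2b : ({s(a,c), s(b,d)} : Set (Sym2 V)).ncard = 2 := Set.ncard_pair hene2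
    have hge : 2 ≤ G.edgeSet.ncard := by
      calc 2 = ({s(a,b), s(c,d)} : Set (Sym2 V)).ncard := h2a.symm
      _ ≤ G.edgeSet.ncard := Set.ncard_le_ncard hsubE (Set.toFinite _)
    rw [hSdef, Set.ncard_union_eq hdisj (Set.toFinite _) (Set.toFinite _),
      Set.ncard_diff hsubE (Set.toFinite _), h2a, h2b]
    omega
  have htree : G'.IsTree := isTree_of_connected_of_card G' hconn (by rw [hES]; exact hcardS)
  refine ⟨G', htree, ?_, hES, hGnac, hGnbd⟩
  have hadj' : ∀ u v : V, G'.Adj u v ↔ (s(u,v) ∈ S ∧ u ≠ v) := by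
    intro u v; rw [hG'def, fromEdgeSet_adj]
  have hmemS : ∀ u v : V, s(u,v) ∈ S ↔
      ((G.Adj u v ∧ s(u,v) ≠ s(a,b) ∧ s(u,v) ≠ s(c,d)) ∨ s(u,v) = s(a,c) ∨ s(u,v) = s(b,d)) := by
    intro u v
    simp only [hSdef, Set.mem_union, Set.mem_diff, Set.mem_insert_iff, Set.mem_singleton_iff,
      mem_edgeSet]
    tauto
  intro p
  by_cases hpa : p = a
  · subst hpa
    refine degr_swap_aux (G := G) (x := b) (y := c) (fun w => ?_) hab hGnac
    rw [hadj' p w, hmemS p w]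
    constructor
    · rintro ⟨(⟨h1, h2, h3⟩ | h | h), hne⟩
      · refine Or.inr ⟨h1, fun hwb => h2 (by rw [hwb])⟩
      · rw [Sym2.eq_iff] at h
        rcases h with ⟨-, h5⟩ | ⟨h4, h5⟩
        · exact Or.inl h5
        · exact absurd h4 hac
      · rw [Sym2.eq_iff] at h
        rcases h with ⟨h4, h5⟩ | ⟨h4, h5⟩
        · exact absurd h4 hab'
        · exact absurd h4 had
    · rintro (rfl | ⟨h1, h2⟩)
      · exact ⟨Or.inr (Or.inl rfl), hac⟩
      · refine ⟨Or.inl ⟨h1, ?_, ?_⟩, h1.ne⟩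
        · intro h; rw [Sym2.eq_iff] at h
          rcases h with ⟨-, h5⟩ | ⟨h4, h5⟩
          · exact h2 h5
          · exact hab' h4
        · intro h; rw [Sym2.eq_iff] at h
          rcases h with ⟨h4, h5⟩ | ⟨h4, h5⟩
          · exact hac h4
          · exact had h4
  · by_cases hpb : p = b
    · subst hpb
      refine degr_swap_aux (G := G) (x := a) (y := d) (fun w => ?_) hab.symm hGnbd
      rw [hadj' p w, hmemS p w]
      constructor
      · rintro ⟨(⟨h1, h2, h3⟩ | h | h), hne⟩
        · refine Or.inr ⟨h1, fun hwa => h2 ?_⟩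
          rw [hwa]; exact Sym2.eq_swap
        · rw [Sym2.eq_iff] at h
          rcases h with ⟨h4, h5⟩ | ⟨h4, h5⟩
          · exact absurd h4.symm hab'
          · exact absurd h4 hbc
        · rw [Sym2.eq_iff] at h
          rcases h with ⟨-, h5⟩ | ⟨h4, h5⟩
          · exact Or.inl h5
          · exact absurd h4 hbd
      · rintro (rfl | ⟨h1, h2⟩)
        · exact ⟨Or.inr (Or.inr rfl), hbd⟩
        · refine ⟨Or.inl ⟨h1, ?_, ?_⟩, h1.ne⟩
          · intro h; rw [Sym2.eq_iff] at h
            rcases h with ⟨h4, h5⟩ | ⟨h4, h5⟩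
            · exact hab' h4.symm
            · exact h2 h5
          · intro h; rw [Sym2.eq_iff] at h
            rcases h with ⟨h4, h5⟩ | ⟨h4, h5⟩
            · exact hbc h4
            · exact hbd h4
    · by_cases hpc : p = c
      · subst hpc
        refine degr_swap_aux (G := G) (x := d) (y := a) (fun w => ?_) hcd
          (fun h => hGnac h.symm)
        rw [hadj' p w, hmemS p w]
        constructor
        · rintro ⟨(⟨h1, h2, h3⟩ | h | h), hne⟩
          · refine Or.inr ⟨h1, fun hwd => h3 (by rw [hwd])⟩
          · rw [Sym2.eq_iff] at h
            rcases h with ⟨h4, h5⟩ | ⟨h4, h5⟩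
            · exact absurd h4.symm hac
            · exact Or.inl h5
          · rw [Sym2.eq_iff] at h
            rcases h with ⟨h4, h5⟩ | ⟨h4, h5⟩
            · exact absurd h4.symm hbc
            · exact absurd h4 hcd'
        · rintro (rfl | ⟨h1, h2⟩)
          · exact ⟨Or.inr (Or.inl Sym2.eq_swap), fun h => hac h.symm⟩
          · refine ⟨Or.inl ⟨h1, ?_, ?_⟩, h1.ne⟩
            · intro h; rw [Sym2.eq_iff] at h
              rcases h with ⟨h4, h5⟩ | ⟨h4, h5⟩
              · exact hac h4.symm
              · exact hbc h4.symm
            · intro h; rw [Sym2.eq_iff] at h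
              rcases h with ⟨-, h5⟩ | ⟨h4, h5⟩
              · exact h2 h5
              · exact hcd' h4
      · by_cases hpd : p = d
        · subst hpd
          refine degr_swap_aux (G := G) (x := c) (y := b) (fun w => ?_) hcd.symm
            (fun h => hGnbd h.symm)
          rw [hadj' p w, hmemS p w]
          constructor
          · rintro ⟨(⟨h1, h2, h3⟩ | h | h), hne⟩
            · refine Or.inr ⟨h1, fun hwc => h3 ?_⟩
              rw [hwc]; exact Sym2.eq_swap
            · rw [Sym2.eq_iff] at h
              rcases h with ⟨h4, h5⟩ | ⟨h4, h5⟩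
              · exact absurd h4.symm had
              · exact absurd h4.symm hcd'
            · rw [Sym2.eq_iff] at h
              rcases h with ⟨h4, h5⟩ | ⟨h4, h5⟩
              · exact absurd h4.symm hbd
              · exact Or.inl h5
          · rintro (rfl | ⟨h1, h2⟩)
            · exact ⟨Or.inr (Or.inr Sym2.eq_swap), fun h => hbd h.symm⟩
            · refine ⟨Or.inl ⟨h1, ?_, ?_⟩, h1.ne⟩
              · intro h; rw [Sym2.eq_iff] at h
                rcases h with ⟨h4, h5⟩ | ⟨h4, h5⟩
                · exact had h4.symm
                · exact hbd h4.symm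
              · intro h; rw [Sym2.eq_iff] at h
                rcases h with ⟨h4, h5⟩ | ⟨h4, h5⟩
                · exact hcd' h4.symm
                · exact h2 h5
        · refine degr_congr (fun w => ?_)
          rw [hadj' p w, hmemS p w]
          constructor
          · rintro ⟨(⟨h1, -, -⟩ | h | h), hne⟩
            · exact h1
            · rw [Sym2.eq_iff] at h
              rcases h with ⟨h4, h5⟩ | ⟨h4, h5⟩
              · exact absurd h4 hpa
              · exact absurd h4 hpc
            · rw [Sym2.eq_iff] at h
              rcases h with ⟨h4, h5⟩ | ⟨h4, h5⟩
              · exact absurd h4 hpb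
              · exact absurd h4 hpd
          · intro h1
            refine ⟨Or.inl ⟨h1, ?_, ?_⟩, h1.ne⟩
            · intro h; rw [Sym2.eq_iff] at h
              rcases h with ⟨h4, h5⟩ | ⟨h4, h5⟩
              · exact hpa h4
              · exact hpb h4
            · intro h; rw [Sym2.eq_iff] at h
              rcases h with ⟨h4, h5⟩ | ⟨h4, h5⟩
              · exact hpc h4
              · exact hpd h4
end Swap

/-! ### Geometry -/

lemma coll_of_two {x p q r : Pt} (hpx : p ≠ x)
    (h1 : Collinear ℝ ({p, x, q} : Set Pt)) (h2 : Collinear ℝ ({p, x, r} : Set Pt)) :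
    Collinear ℝ ({p, q, r} : Set Pt) := by
  have hq : q ∈ affineSpan ℝ ({p, x} : Set Pt) :=
    h1.mem_affineSpan_of_mem_of_ne (by simp) (by simp) (by simp) hpx
  have hr : r ∈ affineSpan ℝ ({p, x} : Set Pt) :=
    h2.mem_affineSpan_of_mem_of_ne (by simp) (by simp) (by simp) hpx
  have h := collinear_insert_insert_of_mem_affineSpan_pair hq hr
  exact h.subset (by intro y hy; rcases hy with rfl | rfl | rfl <;> simp)

lemma coll_of_openSegment {p q x : Pt} (h : x ∈ openSegment ℝ p q) :
    Collinear ℝ ({p, x, q} : Set Pt) := by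
  have hw : Wbtw ℝ p x q := mem_segment_iff_wbtw.mp (openSegment_subset_segment ℝ p q h)
  have h2 := collinear_insert_of_mem_affineSpan_pair hw.mem_affineSpan
  exact h2.subset (by intro y hy; rcases hy with rfl | rfl | rfl <;> simp)

lemma ne_left_of_openSegment {p q x : Pt} (hpq : p ≠ q) (h : x ∈ openSegment ℝ p q) :
    x ≠ p := by
  rintro rfl
  exact hpq (left_mem_openSegment_iff.mp h)

lemma shared_endpoint_coll {p q r x : Pt} (hpq : p ≠ q)
    (h1 : x ∈ openSegment ℝ p q) (h2 : x ∈ openSegment ℝ p r) :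
    Collinear ℝ ({p, q, r} : Set Pt) :=
  coll_of_two (Ne.symm (ne_left_of_openSegment hpq h1))
    (coll_of_openSegment h1) (coll_of_openSegment h2)

lemma cross_strict {a b c d x : Pt} (hab : a ≠ b)
    (hxab : x ∈ openSegment ℝ a b) (hxcd : x ∈ openSegment ℝ c d)
    (hnc : ¬ Collinear ℝ ({a, b, c} : Set Pt)) (hnd : ¬ Collinear ℝ ({a, b, d} : Set Pt)) :
    dist a c + dist b d < dist a b + dist c d := by
  have wab : Wbtw ℝ a x b := mem_segment_iff_wbtw.mp (openSegment_subset_segment ℝ a b hxab)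
  have wcd : Wbtw ℝ c x d := mem_segment_iff_wbtw.mp (openSegment_subset_segment ℝ c d hxcd)
  have hxa : x ≠ a := ne_left_of_openSegment hab hxab
  have hcab : Collinear ℝ ({a, x, b} : Set Pt) := coll_of_openSegment hxab
  have h1 : dist a c < dist a x + dist x c := by
    rcases lt_or_eq_of_le (dist_triangle a x c) with h | h
    · exact h
    · exfalso
      have hw : Wbtw ℝ a x c := dist_add_dist_eq_iff.mp h.symm
      have hcac : Collinear ℝ ({a, x, c} : Set Pt) := by
        have h2 := collinear_insert_of_mem_affineSpan_pair hw.mem_affineSpan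
        exact h2.subset (by intro y hy; rcases hy with rfl | rfl | rfl <;> simp)
      exact hnc (coll_of_two (Ne.symm hxa) hcab hcac)
  have h2 : dist b d < dist b x + dist x d := by
    rcases lt_or_eq_of_le (dist_triangle b x d) with h | h
    · exact h
    · exfalso
      have hw : Wbtw ℝ b x d := dist_add_dist_eq_iff.mp h.symm
      have hxb : x ≠ b := by
        rintro rfl
        exact hab (right_mem_openSegment_iff.mp hxab)
      have hcba : Collinear ℝ ({b, x, a} : Set Pt) := by
        have h2 := collinear_insert_of_mem_affineSpan_pair wab.symm.mem_affineSpan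
        exact h2.subset (by intro y hy; rcases hy with rfl | rfl | rfl <;> simp)
      have hcbd : Collinear ℝ ({b, x, d} : Set Pt) := by
        have h2 := collinear_insert_of_mem_affineSpan_pair hw.mem_affineSpan
        exact h2.subset (by intro y hy; rcases hy with rfl | rfl | rfl <;> simp)
      have : Collinear ℝ ({b, a, d} : Set Pt) := coll_of_two (Ne.symm hxb) hcba hcbd
      exact hnd (this.subset (by intro y hy; rcases hy with rfl | rfl | rfl <;> simp))
  have e1 : dist a x + dist x b = dist a b := wab.dist_add_dist
  have e2 : dist c x + dist x d = dist c d := wcd.dist_add_dist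
  have hcx : dist x c = dist c x := dist_comm _ _
  have hbx : dist b x = dist x b := dist_comm _ _
  linarith


/-! ### Length comparison -/

lemma len_lt (P : Finset Pt) (G G' : SimpleGraph ↥P) (e1 e2 e3 e4 : Sym2 ↥P)
    (hsub : ({e1, e2} : Set (Sym2 ↥P)) ⊆ G.edgeSet)
    (h3 : e3 ∉ G.edgeSet) (h4 : e4 ∉ G.edgeSet)
    (h12 : e1 ≠ e2) (h34 : e3 ≠ e4)
    (hE : G'.edgeSet = (G.edgeSet \ {e1, e2}) ∪ {e3, e4})
    (hlt : Sym2.lift ⟨fun a b : ↥P => Dist.dist a.1 b.1, fun a b => dist_comm a.1 b.1⟩ e3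
         + Sym2.lift ⟨fun a b : ↥P => Dist.dist a.1 b.1, fun a b => dist_comm a.1 b.1⟩ e4
         < Sym2.lift ⟨fun a b : ↥P => Dist.dist a.1 b.1, fun a b => dist_comm a.1 b.1⟩ e1
         + Sym2.lift ⟨fun a b : ↥P => Dist.dist a.1 b.1, fun a b => dist_comm a.1 b.1⟩ e2) :
    treeLen P G' < treeLen P G := by
  classical
  unfold treeLen
  set f : Sym2 ↥P → ℝ :=
    Sym2.lift ⟨fun a b : ↥P => Dist.dist a.1 b.1, fun a b => dist_comm a.1 b.1⟩ with hf
  have hdisj1 : Disjoint (G.edgeSet \ {e1, e2}) ({e1, e2} : Set (Sym2 ↥P)) :=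
    Set.disjoint_left.mpr (fun e he => he.2)
  have hdisj2 : Disjoint (G.edgeSet \ {e1, e2}) ({e3, e4} : Set (Sym2 ↥P)) := by
    refine Set.disjoint_left.mpr (fun e he hm => ?_)
    rcases hm with rfl | hm
    · exact h3 he.1
    · rw [Set.mem_singleton_iff] at hm; subst hm; exact h4 he.1
  have hG : ∑ᶠ e ∈ G.edgeSet, f e
      = (∑ᶠ e ∈ (G.edgeSet \ {e1, e2}), f e) + (f e1 + f e2) := by
    conv_lhs => rw [← Set.diff_union_of_subset hsub]
    rw [finsum_mem_union hdisj1 (Set.toFinite _) (Set.toFinite _), finsum_mem_pair h12]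
  have hG' : ∑ᶠ e ∈ G'.edgeSet, f e
      = (∑ᶠ e ∈ (G.edgeSet \ {e1, e2}), f e) + (f e3 + f e4) := by
    rw [hE, finsum_mem_union hdisj2 (Set.toFinite _) (Set.toFinite _), finsum_mem_pair h34]
  rw [hG, hG']
  have hlt' : f e3 + f e4 < f e1 + f e2 := hlt
  linarith

theorem minimal_length_tree_exists_and_noncrossing (P : Finset Pt)
    (hgp : GenPos ↑P) (d : Pt → ℕ) (B : Finset Pt) (hBP : B ⊆ P)
    (hd1 : ∀ p ∈ P, (d p = 1 ↔ p ∈ B))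
    (hex : ∃ G : SimpleGraph ↥P, G.IsTree ∧ ∀ p : ↥P, degr G p = d p.1) :
    (∃ G : SimpleGraph ↥P, G.IsTree ∧ (∀ p : ↥P, degr G p = d p.1) ∧
      ∀ G' : SimpleGraph ↥P, G'.IsTree → (∀ p : ↥P, degr G' p = d p.1) →
        treeLen P G ≤ treeLen P G') ∧
    (∀ G : SimpleGraph ↥P, G.IsTree → (∀ p : ↥P, degr G p = d p.1) →
      (∀ G' : SimpleGraph ↥P, G'.IsTree → (∀ p : ↥P, degr G' p = d p.1) →
        treeLen P G ≤ treeLen P G') → NonCrossing P G) := by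
  classical
  obtain ⟨Gex, hext, hexd⟩ := hex
  have hSfin : {G : SimpleGraph ↥P | G.IsTree ∧ ∀ p : ↥P, degr G p = d p.1}.Finite :=
    Set.toFinite _
  obtain ⟨G0, hG0S, hG0min⟩ :=
    Set.exists_min_image _ (treeLen P) hSfin ⟨Gex, hext, hexd⟩
  refine ⟨⟨G0, hG0S.1, hG0S.2, fun G' h1 h2 => hG0min G' ⟨h1, h2⟩⟩, ?_⟩
  intro G hGt hGd hGmin a b c d hab hcd hne
  by_contra hcross
  obtain ⟨x, hx1, hx2⟩ := Set.nonempty_iff_ne_empty.mpr hcross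
  have nab : a ≠ b := hab.ne
  have ncd : c ≠ d := hcd.ne
  have vab : a.1 ≠ b.1 := fun h => nab (Subtype.ext h)
  have vcd : c.1 ≠ d.1 := fun h => ncd (Subtype.ext h)
  -- pairwise distinctness of the four points
  have vac : a.1 ≠ c.1 := by
    intro h
    have hbd : b.1 ≠ d.1 := by
      intro h2
      exact hne (by rw [Subtype.ext h, Subtype.ext h2])
    have hx2' : x ∈ openSegment ℝ a.1 d.1 := by rw [h]; exact hx2
    have had : a.1 ≠ d.1 := by rw [h]; exact vcd
    exact hgp a.1 b.1 d.1 a.2 b.2 d.2 vab had hbd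
      (shared_endpoint_coll vab hx1 hx2')
  have vad : a.1 ≠ d.1 := by
    intro h
    have hbc : b.1 ≠ c.1 := by
      intro h2
      exact hne (by rw [Subtype.ext h, Subtype.ext h2, Sym2.eq_swap])
    rw [openSegment_symm] at hx2
    have hx2' : x ∈ openSegment ℝ a.1 c.1 := by rw [h]; exact hx2
    have hac : a.1 ≠ c.1 := by rw [h]; exact fun hh => vcd hh.symm
    exact hgp a.1 b.1 c.1 a.2 b.2 c.2 vab hac hbc
      (shared_endpoint_coll vab hx1 hx2')
  have vbc : b.1 ≠ c.1 := by
    intro h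
    have hx1' : x ∈ openSegment ℝ b.1 a.1 := by rw [openSegment_symm] at hx1; exact hx1
    have hx2' : x ∈ openSegment ℝ b.1 d.1 := by rw [h]; exact hx2
    have hbd : b.1 ≠ d.1 := by rw [h]; exact vcd
    exact hgp b.1 a.1 d.1 b.2 a.2 d.2 (Ne.symm vab) hbd vad
      (shared_endpoint_coll (Ne.symm vab) hx1' hx2')
  have vbd : b.1 ≠ d.1 := by
    intro h
    have hx1' : x ∈ openSegment ℝ b.1 a.1 := by rw [openSegment_symm] at hx1; exact hx1
    rw [openSegment_symm] at hx2
    have hx2' : x ∈ openSegment ℝ b.1 c.1 := by rw [h]; exact hx2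
    have hbc : b.1 ≠ c.1 := by rw [h]; exact fun hh => vcd hh.symm
    exact hgp b.1 a.1 c.1 b.2 a.2 c.2 (Ne.symm vab) hbc vac
      (shared_endpoint_coll (Ne.symm vab) hx1' hx2')
  have hnabc : ¬ Collinear ℝ ({a.1, b.1, c.1} : Set Pt) :=
    hgp a.1 b.1 c.1 a.2 b.2 c.2 vab vac vbc
  have hnabd : ¬ Collinear ℝ ({a.1, b.1, d.1} : Set Pt) :=
    hgp a.1 b.1 d.1 a.2 b.2 d.2 vab vad vbd
  have hlt1 : Dist.dist a.1 c.1 + Dist.dist b.1 d.1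
      < Dist.dist a.1 b.1 + Dist.dist c.1 d.1 :=
    cross_strict vab hx1 hx2 hnabc hnabd
  have hlt2 : Dist.dist a.1 d.1 + Dist.dist b.1 c.1
      < Dist.dist a.1 b.1 + Dist.dist c.1 d.1 := by
    have hx2' : x ∈ openSegment ℝ d.1 c.1 := by rw [openSegment_symm] at hx2; exact hx2
    have := cross_strict vab hx1 hx2' hnabd hnabc
    rw [dist_comm d.1 c.1] at this
    exact this
  have nac : a ≠ c := fun h => vac (congrArg Subtype.val h)
  have nad : a ≠ d := fun h => vad (congrArg Subtype.val h)
  have nbc : b ≠ c := fun h => vbc (congrArg Subtype.val h)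
  have nbd : b ≠ d := fun h => vbd (congrArg Subtype.val h)
  have hsubE : ({s(a,b), s(c,d)} : Set (Sym2 ↥P)) ⊆ G.edgeSet := by
    rintro e (rfl | he)
    · exact G.mem_edgeSet.mpr hab
    · rw [Set.mem_singleton_iff] at he; subst he; exact G.mem_edgeSet.mpr hcd
  rcases reach_four G hGt.isConnected a b c d with h | h | h | h
  · -- H.Reachable a c : roles (b, a, c, d), new edges s(b,c), s(a,d)
    have hsets : ({s(b,a), s(c,d)} : Set (Sym2 ↥P)) = {s(a,b), s(c,d)} := by
      rw [show s(b,a) = s(a,b) from Sym2.eq_swap]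
    have h' : (G.deleteEdges {s(b,a), s(c,d)}).Reachable a c := by rw [hsets]; exact h
    obtain ⟨G', htree, hdeg, hE, hnBC, hnAD⟩ :=
      swap_tree_s15 hGt hab.symm hcd nbc nbd nac nad h'
    have hlen : treeLen P G' < treeLen P G := by
      refine len_lt P G G' s(b,a) s(c,d) s(b,c) s(a,d)
        (by rw [hsets]; exact hsubE)
        (fun hm => hnBC (G.mem_edgeSet.mp hm)) (fun hm => hnAD (G.mem_edgeSet.mp hm))
        (by rw [show s(b,a) = s(a,b) from Sym2.eq_swap]; exact hne)
        ?_ hE ?_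
      · intro hh; rw [Sym2.eq_iff] at hh
        rcases hh with ⟨h4, h5⟩ | ⟨h4, h5⟩
        · exact nab h4.symm
        · exact nbd h4
      · simp only [Sym2.lift_mk]
        rw [dist_comm b.1 a.1]
        linarith
    have := hGmin G' htree (fun p => (hdeg p).trans (hGd p))
    linarith
  · -- H.Reachable a d : roles (b, a, d, c), new edges s(b,d), s(a,c)
    have hsets : ({s(b,a), s(d,c)} : Set (Sym2 ↥P)) = {s(a,b), s(c,d)} := by
      rw [show s(b,a) = s(a,b) from Sym2.eq_swap, show s(d,c) = s(c,d) from Sym2.eq_swap]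
    have h' : (G.deleteEdges {s(b,a), s(d,c)}).Reachable a d := by rw [hsets]; exact h
    obtain ⟨G', htree, hdeg, hE, hnBD, hnAC⟩ :=
      swap_tree_s15 hGt hab.symm hcd.symm nbd nbc nad nac h'
    have hlen : treeLen P G' < treeLen P G := by
      refine len_lt P G G' s(b,a) s(d,c) s(b,d) s(a,c)
        (by rw [hsets]; exact hsubE)
        (fun hm => hnBD (G.mem_edgeSet.mp hm)) (fun hm => hnAC (G.mem_edgeSet.mp hm))
        (by rw [show s(b,a) = s(a,b) from Sym2.eq_swap,
              show s(d,c) = s(c,d) from Sym2.eq_swap]; exact hne)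
        ?_ hE ?_
      · intro hh; rw [Sym2.eq_iff] at hh
        rcases hh with ⟨h4, h5⟩ | ⟨h4, h5⟩
        · exact nab h4.symm
        · exact nbc h4
      · simp only [Sym2.lift_mk]
        rw [dist_comm b.1 a.1, dist_comm d.1 c.1]
        linarith
    have := hGmin G' htree (fun p => (hdeg p).trans (hGd p))
    linarith
  · -- H.Reachable b c : roles (a, b, c, d), new edges s(a,c), s(b,d)
    obtain ⟨G', htree, hdeg, hE, hnAC, hnBD⟩ :=
      swap_tree_s15 hGt hab hcd nac nad nbc nbd h
    have hlen : treeLen P G' < treeLen P G := by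
      refine len_lt P G G' s(a,b) s(c,d) s(a,c) s(b,d)
        hsubE
        (fun hm => hnAC (G.mem_edgeSet.mp hm)) (fun hm => hnBD (G.mem_edgeSet.mp hm))
        hne ?_ hE ?_
      · intro hh; rw [Sym2.eq_iff] at hh
        rcases hh with ⟨h4, h5⟩ | ⟨h4, h5⟩
        · exact nab h4
        · exact nad h4
      · simp only [Sym2.lift_mk]
        linarith
    have := hGmin G' htree (fun p => (hdeg p).trans (hGd p))
    linarith
  · -- H.Reachable b d : roles (a, b, d, c), new edges s(a,d), s(b,c)
    have hsets : ({s(a,b), s(d,c)} : Set (Sym2 ↥P)) = {s(a,b), s(c,d)} := by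
      rw [show s(d,c) = s(c,d) from Sym2.eq_swap]
    have h' : (G.deleteEdges {s(a,b), s(d,c)}).Reachable b d := by rw [hsets]; exact h
    obtain ⟨G', htree, hdeg, hE, hnAD, hnBC⟩ :=
      swap_tree_s15 hGt hab hcd.symm nad nac nbd nbc h'
    have hlen : treeLen P G' < treeLen P G := by
      refine len_lt P G G' s(a,b) s(d,c) s(a,d) s(b,c)
        (by rw [hsets]; exact hsubE)
        (fun hm => hnAD (G.mem_edgeSet.mp hm)) (fun hm => hnBC (G.mem_edgeSet.mp hm))
        (by rw [show s(d,c) = s(c,d) from Sym2.eq_swap]; exact hne)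
        ?_ hE ?_
      · intro hh; rw [Sym2.eq_iff] at hh
        rcases hh with ⟨h4, h5⟩ | ⟨h4, h5⟩
        · exact nab h4
        · exact nac h4
      · simp only [Sym2.lift_mk]
        rw [dist_comm d.1 c.1]
        linarith
    have := hGmin G' htree (fun p => (hdeg p).trans (hGd p))
    linarith
end
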